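/- arXiv:2307.03239 — 4 statements merged into one kernel-verified Lean document; each statement's English description precedes it below -/
import Mathlib

section
/- The set of strata {H_s^u(f) : u a composition of d}, partially ordered by inclusion, is a lattice; moreover the intersection of two strata H_s^u(f) and H_s^v(f) equals the stratum H_s^{u∧v}(f), where u∧v is the meet of u and v in the lattice of compositions of d, and this intersection is the meet of the two strata. -/
noncomputable section

open Polynomial

/-- The set of partial sums `{u₁, u₁+u₂, …, d}` of a composition `u` of `d`. -/
def Composition.sums {d : ℕ} (u : Composition d) : Finset ℕ :=
  (Finset.range u.length).image fun i => u.sizeUpTo (i + 1)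

/-- `CompLe v u` : the partial order on compositions of `d`; `v ≤ u` iff the set of
partial sums of `v` is contained in the set of partial sums of `u` (equivalently, `v` is
obtained from `u` by merging blocks of consecutive parts into their sums). -/
def CompLe {d : ℕ} (v u : Composition d) : Prop := v.sums ⊆ u.sums

/-- A real univariate polynomial is hyperbolic if all of its roots are real, i.e. it has
`natDegree` many real roots counted with multiplicity. -/
def Hyperbolic (p : ℝ[X]) : Prop := p.roots.card = p.natDegree

/-- `HasComposition h u` : the composition `v(h)` of the hyperbolic polynomial `h`
(the tuple of multiplicities of its increasingly ordered distinct roots) equals `u`. -/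
def HasComposition {d : ℕ} (h : ℝ[X]) (u : Composition d) : Prop :=
  ∃ a : Fin u.length → ℝ, StrictMono a ∧
    h = ∏ i, (X - C (a i)) ^ u.blocksFun i

/-- `Hset d s f` is `H_s(f)` : the monic hyperbolic polynomials of degree `d` whose
coefficients `h_i = coeff (d-i)` agree with those of `f` for all `i ≤ s`. -/
def Hset (d s : ℕ) (f : ℝ[X]) : Set ℝ[X] :=
  {h | h.Monic ∧ h.natDegree = d ∧ Hyperbolic h ∧
    ∀ j, d - s ≤ j → h.coeff j = f.coeff j}

/-- `HSu d s f u` is the stratum `H_s^u(f) = {h ∈ H_s(f) | v(h) ≤ u}`. -/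
def HSu (d s : ℕ) (f : ℝ[X]) (u : Composition d) : Set ℝ[X] :=
  {h | h ∈ Hset d s f ∧ ∃ w : Composition d, CompLe w u ∧ HasComposition h w}

/-- `C` is a maximal chain in the poset `(L, ⊆)`. -/
def MaximalChain {α : Type*} (L C : Set (Set α)) : Prop :=
  C ⊆ L ∧ IsChain (· ⊆ ·) C ∧
    ∀ C', C' ⊆ L → IsChain (· ⊆ ·) C' → C ⊆ C' → C' = C

/-- `S` is the join (least upper bound) of the family `A` in the poset `(L, ⊆)`. -/
def IsJoinIn {α : Type*} (L A : Set (Set α)) (S : Set α) : Prop :=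
  S ∈ L ∧ (∀ a ∈ A, a ⊆ S) ∧ ∀ T ∈ L, (∀ a ∈ A, a ⊆ T) → S ⊆ T

/-- `S` is the meet (greatest lower bound) of the family `A` in the poset `(L, ⊆)`. -/
def IsMeetIn {α : Type*} (L A : Set (Set α)) (S : Set α) : Prop :=
  S ∈ L ∧ (∀ a ∈ A, S ⊆ a) ∧ ∀ T ∈ L, (∀ a ∈ A, T ⊆ a) → T ⊆ S

/-- `b` covers `a` in the poset `(L, ⊆)`. -/
def CoversIn {α : Type*} (L : Set (Set α)) (a b : Set α) : Prop :=
  a ∈ L ∧ b ∈ L ∧ a ⊂ b ∧ ∀ c ∈ L, a ⊂ c → c ⊂ b → False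

/-- The set of strata of `H_s(f)`, as sets of polynomials. -/
def strataL (d s : ℕ) (f : ℝ[X]) : Set (Set ℝ[X]) :=
  {S | ∃ u : Composition d, S = HSu d s f u}

/-!
A polynomial has at most one composition: it is the list of multiplicities of its distinct
roots in increasing order. Hence `h` lies in both `H_s^u(f)` and `H_s^v(f)` exactly when its
composition lies below `u` and `v`, i.e. below `u ∧ v`, so strata intersect as compositions
meet. The strata thus form a finite family of sets closed under intersection with a largest
member `H_s^{(1,…,1)}(f)`; in such a family two members have the intersection as meet and
the intersection of all their common upper bounds as join.
-/

namespace Composition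

variable {n : ℕ}

theorem image_val_boundaries (c : Composition n) :
    c.boundaries.image Fin.val = insert 0 c.sums := by
  ext x
  simp [boundaries, sums, boundary, Fin.exists_fin_succ, eq_comm, Fin.exists_iff]

theorem zero_notMem_sums (c : Composition n) : 0 ∉ c.sums := by
  simp only [sums, Finset.mem_image, Finset.mem_range, not_exists, not_and]
  intro i hi
  have := c.one_le_blocksFun ⟨i, hi⟩
  rw [c.sizeUpTo_succ' ⟨i, hi⟩]
  omega

theorem compLe_iff_boundaries_subset {u v : Composition n} :
    CompLe v u ↔ v.boundaries ⊆ u.boundaries := by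
  rw [← Finset.image_subset_image_iff Fin.val_injective, image_val_boundaries,
    image_val_boundaries, Finset.insert_subset_insert_iff v.zero_notMem_sums, CompLe]

def inf (u v : Composition n) : Composition n :=
  CompositionAsSet.toComposition
    { boundaries := u.boundaries ∩ v.boundaries
      zero_mem := Finset.mem_inter.2
        ⟨u.toCompositionAsSet.zero_mem, v.toCompositionAsSet.zero_mem⟩
      getLast_mem := Finset.mem_inter.2
        ⟨u.toCompositionAsSet.getLast_mem, v.toCompositionAsSet.getLast_mem⟩ }

theorem compLe_inf_iff {u v w : Composition n} :
    CompLe w (u.inf v) ↔ CompLe w u ∧ CompLe w v := by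
  simp only [compLe_iff_boundaries_subset, inf, CompositionAsSet.toComposition_boundaries,
    Finset.subset_inter_iff]

theorem compLe_ones (w : Composition n) : CompLe w (ones n) := by
  have : (ones n).boundaries = Finset.univ :=
    Finset.eq_univ_of_card _ (by simp [card_boundaries_eq_succ_length])
  rw [compLe_iff_boundaries_subset, this]
  exact Finset.subset_univ _

end Composition

theorem Multiset.count_sum_nsmul_singleton {α ι : Type*} [DecidableEq α] [Fintype ι]
    {a : ι → α} (ha : Function.Injective a) (m : ι → ℕ) (i : ι) :
    (∑ j, m j • ({a j} : Multiset α)).count (a i) = m i := by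
  rw [Multiset.count_sum', Finset.sum_eq_single i (fun j _ hji => ?_) (by simp)]
  · simp
  · simp [ha.ne hji.symm]

theorem roots_prod_X_sub_C_pow {R ι : Type*} [CommRing R] [IsDomain R] [Fintype ι]
    (a : ι → R) (m : ι → ℕ) :
    (∏ i, (X - C (a i)) ^ m i).roots = ∑ i, m i • {a i} := by
  rw [roots_prod _ _ (Finset.prod_ne_zero_iff.2 fun i _ => pow_ne_zero _ (X_sub_C_ne_zero _))]
  simp only [roots_pow, roots_X_sub_C, Multiset.bind]
  rfl

theorem HasComposition.blocks_eq {d : ℕ} {h : ℝ[X]} {u : Composition d}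
    (hu : HasComposition h u) :
    u.blocks = (h.roots.toFinset.sort (· ≤ ·)).map h.roots.count := by
  obtain ⟨a, ha, rfl⟩ := hu
  have hpos (i : Fin u.length) : u.blocksFun i ≠ 0 :=
    Nat.one_le_iff_ne_zero.mp (u.one_le_blocksFun i)
  have hsupp :
      (∑ i, u.blocksFun i • ({a i} : Multiset ℝ)).toFinset = (List.ofFn a).toFinset := by
    ext x
    simp [Multiset.mem_sum, hpos, eq_comm]
  have hsorted : (List.ofFn a).Pairwise (· ≤ ·) :=
    List.pairwise_ofFn.2 fun _ _ hij => (ha hij).le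
  rw [roots_prod_X_sub_C_pow, hsupp,
    (List.toFinset_sort _ (List.nodup_ofFn.2 ha.injective)).2 hsorted, List.map_ofFn,
    ← u.ofFn_blocksFun]
  congr 1
  funext i
  exact (Multiset.count_sum_nsmul_singleton ha.injective _ i).symm

theorem HasComposition.unique {d : ℕ} {h : ℝ[X]} {u w : Composition d}
    (hu : HasComposition h u) (hw : HasComposition h w) : u = w :=
  Composition.ext (hu.blocks_eq.trans hw.blocks_eq.symm)

theorem sInter_mem_of_inter_mem {α : Type*} {L : Set (Set α)}
    (hL : ∀ S ∈ L, ∀ T ∈ L, S ∩ T ∈ L) {U : Set (Set α)} (hU : U.Finite)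
    (hne : U.Nonempty) (hUL : U ⊆ L) : ⋂₀ U ∈ L := by
  lift U to Finset (Set α) using hU
  rw [← Set.sInf_eq_sInter, ← Finset.inf'_id_eq_csInf _ (by simpa using hne)]
  exact Finset.inf'_mem L hL _ _ _ hUL

/-- The join is the intersection of all upper bounds of `A` in `L`. -/
theorem exists_isJoinIn_of_inter_mem {α : Type*} {L A : Set (Set α)} (hfin : L.Finite)
    (hL : ∀ S ∈ L, ∀ T ∈ L, S ∩ T ∈ L) (hA : ∃ U ∈ L, ∀ a ∈ A, a ⊆ U) :
    ∃ J, IsJoinIn L A J := by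
  set B := {U ∈ L | ∀ a ∈ A, a ⊆ U}
  have hBL : B ⊆ L := fun _ hU => hU.1
  refine ⟨⋂₀ B, sInter_mem_of_inter_mem hL (hfin.subset hBL) hA hBL,
    fun a ha => Set.subset_sInter fun U hU => hU.2 a ha,
    fun T hT hTA => Set.sInter_subset_of_mem ⟨hT, hTA⟩⟩

theorem isMeetIn_pair_inter {α : Type*} {L : Set (Set α)} {S T : Set α} (h : S ∩ T ∈ L) :
    IsMeetIn L {S, T} (S ∩ T) := by
  refine ⟨h, ?_, fun U _ hU => Set.subset_inter (hU S (by simp)) (hU T (by simp))⟩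
  rintro a (rfl | rfl)
  exacts [Set.inter_subset_left, Set.inter_subset_right]

section Strata

variable {d s : ℕ} {f : ℝ[X]}

theorem HSu_mono {u w : Composition d} (h : CompLe u w) : HSu d s f u ⊆ HSu d s f w :=
  fun _ ⟨hp, v, hv, hc⟩ => ⟨hp, v, hv.trans h, hc⟩

theorem HSu_inter_eq {u v m : Composition d} (hmu : CompLe m u) (hmv : CompLe m v)
    (hm : ∀ z, CompLe z u → CompLe z v → CompLe z m) :
    HSu d s f u ∩ HSu d s f v = HSu d s f m := by
  refine Set.Subset.antisymm ?_ (Set.subset_inter (HSu_mono hmu) (HSu_mono hmv))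
  rintro p ⟨⟨hp, w, hwu, hw⟩, ⟨-, w', hw'v, hw'⟩⟩
  obtain rfl := hw.unique hw'
  exact ⟨hp, w, hm w hwu hw'v, hw⟩

theorem inter_mem_strataL {S T : Set ℝ[X]} (hS : S ∈ strataL d s f) (hT : T ∈ strataL d s f) :
    S ∩ T ∈ strataL d s f := by
  obtain ⟨u, rfl⟩ := hS
  obtain ⟨v, rfl⟩ := hT
  have hinf := Composition.compLe_inf_iff.1 (Finset.Subset.refl (u.inf v).sums)
  exact ⟨u.inf v,
    HSu_inter_eq hinf.1 hinf.2 fun _ hu hv => Composition.compLe_inf_iff.2 ⟨hu, hv⟩⟩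

theorem strataL_finite : (strataL d s f).Finite := by
  convert Set.finite_range (HSu d s f)
  simp [strataL, Set.ext_iff, eq_comm]

theorem subset_HSu_ones {S : Set ℝ[X]} (hS : S ∈ strataL d s f) :
    S ⊆ HSu d s f (Composition.ones d) := by
  obtain ⟨u, rfl⟩ := hS
  exact HSu_mono (Composition.compLe_ones u)

end Strata

theorem strata_form_lattice_general (d s : ℕ) (f : ℝ[X]) :
    (∀ S ∈ strataL d s f, ∀ T ∈ strataL d s f,
      (∃ J, IsJoinIn (strataL d s f) {S, T} J) ∧
      (∃ M, IsMeetIn (strataL d s f) {S, T} M)) ∧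
    (∀ u v m : Composition d,
      (CompLe m u ∧ CompLe m v ∧
        ∀ z : Composition d, CompLe z u → CompLe z v → CompLe z m) →
      HSu d s f u ∩ HSu d s f v = HSu d s f m ∧
      IsMeetIn (strataL d s f) {HSu d s f u, HSu d s f v} (HSu d s f m)) := by
  refine ⟨fun S hS T hT => ⟨?_, _, isMeetIn_pair_inter (inter_mem_strataL hS hT)⟩, ?_⟩
  · refine exists_isJoinIn_of_inter_mem strataL_finite (fun _ hS _ hT => inter_mem_strataL hS hT)
      ⟨_, ⟨Composition.ones d, rfl⟩, ?_⟩
    rintro a (rfl | rfl)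
    exacts [subset_HSu_ones hS, subset_HSu_ones hT]
  · rintro u v m ⟨hmu, hmv, hm⟩
    have hinter : HSu d s f u ∩ HSu d s f v = HSu d s f m := HSu_inter_eq hmu hmv hm
    exact ⟨hinter, hinter ▸ isMeetIn_pair_inter (hinter ▸ ⟨m, rfl⟩)⟩

/-- The set of strata `{H_s^u(f) | u a composition of d}`, partially ordered by inclusion,
is a lattice: any two strata have a join and a meet.  Moreover, if `m = u ∧ v` is the meet
of the compositions `u` and `v`, then `H_s^u(f) ∩ H_s^v(f) = H_s^m(f)`, and this
intersection is the meet of the two strata. -/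
theorem strata_form_lattice (d s : ℕ) (hd : 1 ≤ d) (hsd : s ≤ d) (f : ℝ[X])
    (hmon : f.Monic) (hdeg : f.natDegree = d) (hhyp : Hyperbolic f) :
    (∀ S ∈ strataL d s f, ∀ T ∈ strataL d s f,
      (∃ J, IsJoinIn (strataL d s f) {S, T} J) ∧
      (∃ M, IsMeetIn (strataL d s f) {S, T} M)) ∧
    (∀ u v m : Composition d,
      (CompLe m u ∧ CompLe m v ∧
        ∀ z : Composition d, CompLe z u → CompLe z v → CompLe z m) →
      HSu d s f u ∩ HSu d s f v = HSu d s f m ∧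
      IsMeetIn (strataL d s f) {HSu d s f u, HSu d s f v} (HSu d s f m)) :=
  strata_form_lattice_general d s f
end
end

section
/- Let u be a composition of d with ℓ(u) = l. Then H_s^u(f), identified with a subset of ℝ^{d-s} via the last d-s coefficients, is closed in ℝ^{d-s}, and the map Π_u : V_s^u(f) ∩ K_l → H_s^u(f) is a homeomorphism. -/
/-!
`Π_u` is continuous, and on the closed set `V_s^u(f) ∩ K_l` it is injective (a monotone `x` is
read off from the sorted roots of `Π_u(x)`) and proper (Cauchy's bound controls the roots by the
coefficients, which equal those of `f` in degrees `≥ d - s` and are coordinates of the image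
otherwise). A continuous, injective, proper map is a closed embedding. Its image is `H_s^u(f)`:
merging the equal consecutive entries of a monotone `x` gives a coarser composition with strictly
increasing roots, and conversely the roots of a coarser composition can be repeated along `u`.
-/

noncomputable section

open Polynomial

/-- The identification of `h ∈ H_s(f)` with `(h_{s+1}, …, h_d) ∈ ℝ^{d-s}` :
coordinate `i` is `h_{s+1+i}`, i.e. the coefficient of `t^{d-s-1-i}`. -/
def coeffVec (d s : ℕ) (h : ℝ[X]) : Fin (d - s) → ℝ :=
  fun i => h.coeff (d - s - 1 - i.val)

/-- The stratum `H_s^u(f)`, identified with a subset of `ℝ^{d-s}`. -/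
def strataSet (d s : ℕ) (f : ℝ[X]) (u : Composition d) : Set (Fin (d - s) → ℝ) :=
  coeffVec d s '' HSu d s f u

/-- The `i`-th elementary symmetric polynomial in `d` variables, evaluated at `y`. -/
def esym (d i : ℕ) (y : Fin d → ℝ) : ℝ :=
  ∑ A ∈ Finset.powersetCard i (Finset.univ : Finset (Fin d)), ∏ j ∈ A, y j

/-- `x_u ∈ ℝ^d` : the point obtained from `x ∈ ℝ^{ℓ(u)}` by repeating each `x i`
exactly `u i` times. -/
def repVec {d : ℕ} (u : Composition d) (x : Fin u.length → ℝ) : Fin d → ℝ :=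
  fun j => x (u.index j)

/-- The Vandermonde variety `V_s^u(f) = {x ∈ ℝ^l | e_i(x_u) = (-1)^i f_i ∀ 1 ≤ i ≤ s}`,
where `f_i = coeff (d - i) f`. -/
def Vset (d s : ℕ) (f : ℝ[X]) (u : Composition d) : Set (Fin u.length → ℝ) :=
  {x | ∀ i, 1 ≤ i → i ≤ s → esym d i (repVec u x) = (-1 : ℝ) ^ i * f.coeff (d - i)}

/-- `K_l = {x ∈ ℝ^l | x₁ ≤ … ≤ x_l}`. -/
def Kset (l : ℕ) : Set (Fin l → ℝ) := {x | Monotone x}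

/-- `Π_u(x) = ∏ᵢ (t - xᵢ)^{uᵢ} = t^d - e₁(x_u) t^{d-1} + … + (-1)^d e_d(x_u)`. -/
def PiMap {d : ℕ} (u : Composition d) (x : Fin u.length → ℝ) : ℝ[X] :=
  ∏ i, (X - C (x i)) ^ u.blocksFun i

namespace Composition

variable {d : ℕ} (c : Composition d)

theorem le_index_iff {i : ℕ} {j : Fin d} : i ≤ c.index j ↔ c.sizeUpTo i ≤ j := by
  refine ⟨fun h => (c.monotone_sizeUpTo h).trans (c.sizeUpTo_index_le j), fun h => ?_⟩
  by_contra! hlt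
  exact (c.lt_sizeUpTo_index_succ j).not_ge (h.trans' (c.monotone_sizeUpTo hlt))

theorem index_lt_iff {i : ℕ} {j : Fin d} : c.index j < i ↔ (j : ℕ) < c.sizeUpTo i := by
  simpa only [not_le] using c.le_index_iff.not

theorem monotone_index : Monotone c.index := fun j _ h =>
  Fin.le_def.2 <| c.le_index_iff.2 <| (c.sizeUpTo_index_le j).trans h

theorem coe_embedding_zero (i : Fin c.length) :
    (c.embedding i ⟨0, c.one_le_blocksFun i⟩ : ℕ) = c.sizeUpTo i := by
  simp [coe_embedding]

theorem exists_strictMono_comp_index {α : Type*} [LinearOrder α] {y : Fin d → α}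
    (hy : Monotone y) :
    ∃ (w : Composition d) (a : Fin w.length → α), StrictMono a ∧ y = a ∘ w.index := by
  classical
  -- the boundaries of `w` are the points separating smaller values of `y` from larger ones
  let Separates (b : ℕ) : Prop := ∀ j j' : Fin d, (j : ℕ) < b → b ≤ j' → y j < y j'
  let cs : CompositionAsSet d :=
    ⟨Finset.univ.filter fun b => Separates b, by simp [Separates], by simp [Separates]⟩
  let w := cs.toComposition
  have hsep (b : Fin (d + 1)) : Separates b ↔ ∃ i : Fin (w.length + 1), w.sizeUpTo i = b := by
    simpa [cs, Composition.boundaries, Composition.boundary, Fin.ext_iff] using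
      (congrArg (b ∈ ·) cs.toComposition_boundaries).symm
  have hsep_sizeUpTo (i : ℕ) (hi : i ≤ w.length) : Separates (w.sizeUpTo i) :=
    (hsep ⟨w.sizeUpTo i, by have := w.sizeUpTo_le i; omega⟩).2 ⟨⟨i, by omega⟩, rfl⟩
  let a (i : Fin w.length) : α := y (w.embedding i ⟨0, w.one_le_blocksFun i⟩)
  refine ⟨w, a, fun i i' hii' => hsep_sizeUpTo (i + 1) i.2 _ _ ?_ ?_, ?_⟩
  · simpa [w.coe_embedding_zero] using w.sizeUpTo_strict_mono i.2
  · simpa [w.coe_embedding_zero] using w.monotone_sizeUpTo (Nat.succ_le_of_lt hii')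
  · funext j
    set s := w.embedding (w.index j) ⟨0, w.one_le_blocksFun _⟩
    have hsj : s ≤ j := Fin.le_def.2 (by simpa [s] using w.sizeUpTo_index_le j)
    refine (le_antisymm (hy hsj) (not_lt.1 fun hlt => ?_)).symm
    -- a jump of `y` inside the block of `j` would give a boundary strictly inside that block
    have hne : (Finset.univ.filter fun t => y j ≤ y t).Nonempty := ⟨j, by simp⟩
    obtain ⟨b, hb, hbmin⟩ : ∃ b, y j ≤ y b ∧ ∀ t, y j ≤ y t → b ≤ t :=
      ⟨_, (Finset.mem_filter.1 (Finset.min'_mem _ hne)).2,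
        fun t ht => Finset.min'_le _ t (by simpa using ht)⟩
    have hbj : b ≤ j := hbmin j le_rfl
    have hsb : s < b := lt_of_not_ge fun h => (hy h).not_gt (hlt.trans_le hb)
    obtain ⟨k, hk : w.sizeUpTo k = b⟩ := (hsep ⟨b, by omega⟩).1 fun t t' ht ht' =>
      (lt_of_not_ge fun h => (hbmin t h).not_gt ht).trans_le
        (hb.trans (hy (Fin.le_def.2 ht')))
    have h1 : (w.index j : ℕ) < k := by
      by_contra! h
      have hs : (s : ℕ) = w.sizeUpTo (w.index j) := w.coe_embedding_zero _
      have := w.monotone_sizeUpTo h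
      rw [Fin.lt_def] at hsb
      omega
    have h2 : (k : ℕ) ≤ w.index j := w.le_index_iff.2 (by simpa [hk] using hbj)
    omega

end Composition

theorem CompLe.index_eq {d : ℕ} {w u : Composition d} (h : CompLe w u) {j j' : Fin d}
    (hjj' : u.index j = u.index j') : w.index j = w.index j' := by
  suffices key : ∀ j j' : Fin d, u.index j = u.index j' → ¬ w.index j < w.index j' from
    le_antisymm (not_lt.1 (key j' j hjj'.symm)) (not_lt.1 (key j j' hjj'))
  intro j j' hjj' hlt
  have hm : w.sizeUpTo (w.index j + 1) ∈ w.sums := by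
    simpa [Composition.sums] using ⟨_, (w.index j).2, rfl⟩
  obtain ⟨k, -, hkm⟩ : ∃ k < u.length, u.sizeUpTo (k + 1) = w.sizeUpTo (w.index j + 1) := by
    simpa [Composition.sums] using h hm
  have hj : u.index j < k + 1 := u.index_lt_iff.2 (hkm ▸ w.lt_sizeUpTo_index_succ j)
  have hj' : k + 1 ≤ u.index j' := u.le_index_iff.2 (hkm ▸ w.le_index_iff.1 hlt)
  omega

theorem compLe_of_index_eq {d : ℕ} {w u : Composition d}
    (h : ∀ j j' : Fin d, u.index j = u.index j' → w.index j = w.index j') : CompLe w u := by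
  intro m hm
  obtain ⟨i, hi, rfl⟩ : ∃ i < w.length, w.sizeUpTo (i + 1) = m := by
    simpa [Composition.sums] using hm
  have hpos := w.sizeUpTo_strict_mono hi
  have hle := w.sizeUpTo_le (i + 1)
  -- the last point of the `i`-th `w`-block lies in a `u`-block, which must end with it
  let j : Fin d := ⟨w.sizeUpTo (i + 1) - 1, by omega⟩
  have hjv : (j : ℕ) = w.sizeUpTo (i + 1) - 1 := rfl
  have hwj : w.index j < i + 1 := w.index_lt_iff.2 (by omega)
  have hu : (j : ℕ) < u.sizeUpTo (u.index j + 1) := u.lt_sizeUpTo_index_succ j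
  have hu' := u.sizeUpTo_index_le j
  suffices u.sizeUpTo (u.index j + 1) = w.sizeUpTo (i + 1) by
    simpa [Composition.sums] using ⟨u.index j, (u.index j).2, this⟩
  by_contra hne
  have hlt : w.sizeUpTo (i + 1) < d := by
    have := u.sizeUpTo_le (u.index j + 1); omega
  let j' : Fin d := ⟨w.sizeUpTo (i + 1), hlt⟩
  have hwj' : i + 1 ≤ w.index j' := w.le_index_iff.2 le_rfl
  have huj : u.index j' = u.index j := by
    refine le_antisymm (Fin.le_def.2 (Nat.lt_succ_iff.1 (u.index_lt_iff.2 ?_))) ?_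
    · change w.sizeUpTo (i + 1) < u.sizeUpTo (u.index j + 1); omega
    · exact u.monotone_index (Fin.le_def.2 (by change _ ≤ w.sizeUpTo (i + 1); omega))
  have := congrArg Fin.val (h j' j huj)
  omega

theorem eq_of_monotone_of_map_univ_eq {α : Type*} {d : ℕ} [LinearOrder α] {y z : Fin d → α}
    (hy : Monotone y) (hz : Monotone z)
    (h : Finset.univ.val.map y = Finset.univ.val.map z) : y = z := by
  have hperm : (List.ofFn y).Perm (List.ofFn z) := by
    rw [← Multiset.coe_eq_coe, List.ofFn_eq_map, List.ofFn_eq_map, ← Multiset.map_coe,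
      ← Multiset.map_coe]
    exact h
  exact List.ofFn_inj.1 <| hperm.eq_of_sortedLE (List.sortedLE_ofFn_iff.2 hy)
    (List.sortedLE_ofFn_iff.2 hz)

section RepVec

variable {d : ℕ} {w u : Composition d}

theorem repVec_injective (u : Composition d) : Function.Injective (repVec u) := fun x y h =>
  funext fun i => by
    simpa [repVec, u.index_embedding] using congrFun h (u.embedding i ⟨0, u.one_le_blocksFun i⟩)

theorem Monotone.repVec {x : Fin u.length → ℝ} (hx : Monotone x) : Monotone (repVec u x) :=
  hx.comp u.monotone_index

theorem exists_monotone_repVec_eq_of_compLe (h : CompLe w u) {a : Fin w.length → ℝ}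
    (ha : Monotone a) : ∃ x, Monotone x ∧ repVec u x = repVec w a := by
  let start (i : Fin u.length) : Fin d := u.embedding i ⟨0, u.one_le_blocksFun i⟩
  refine ⟨fun i => a (w.index (start i)), fun i i' hii' => ha (w.monotone_index ?_), ?_⟩
  · simpa [start, Fin.le_def, u.coe_embedding_zero] using u.monotone_sizeUpTo hii'
  · funext j
    exact congrArg a (h.index_eq (u.index_embedding _ _))

theorem exists_compLe_strictMono_repVec_eq {x : Fin u.length → ℝ} (hx : Monotone x) :
    ∃ w : Composition d, CompLe w u ∧ ∃ a, StrictMono a ∧ repVec w a = repVec u x := by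
  obtain ⟨w, a, ha, hy⟩ := Composition.exists_strictMono_comp_index hx.repVec
  refine ⟨w, compLe_of_index_eq fun j j' hjj' => ha.injective ?_, a, ha, hy.symm⟩
  exact (congrFun hy j).symm.trans ((congrArg x hjj').trans (congrFun hy j'))

end RepVec

section PiMap

variable {d : ℕ} (u : Composition d) (x : Fin u.length → ℝ)

theorem piMap_eq_prod_repVec : PiMap u x = ∏ j, (X - C (repVec u x j)) := by
  rw [← u.prod_prod_apply_embedding]
  simp [PiMap, repVec, u.index_embedding]

theorem piMap_eq_piMap_of_repVec_eq {w : Composition d} {a : Fin w.length → ℝ}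
    (h : repVec u x = repVec w a) : PiMap u x = PiMap w a := by
  rw [piMap_eq_prod_repVec, piMap_eq_prod_repVec, h]

theorem piMap_eq_multiset_prod :
    PiMap u x = ((Finset.univ.val.map (repVec u x)).map fun t => X - C t).prod := by
  rw [piMap_eq_prod_repVec, Multiset.map_map]
  rfl

theorem monic_piMap : (PiMap u x).Monic := by
  rw [piMap_eq_prod_repVec]
  exact monic_prod_of_monic _ _ fun j _ => monic_X_sub_C _

theorem natDegree_piMap : (PiMap u x).natDegree = d := by
  rw [piMap_eq_multiset_prod, natDegree_multiset_prod_X_sub_C_eq_card]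
  simp

theorem roots_piMap : (PiMap u x).roots = Finset.univ.val.map (repVec u x) := by
  rw [piMap_eq_multiset_prod, roots_multiset_prod_X_sub_C]

theorem hyperbolic_piMap : Hyperbolic (PiMap u x) := by
  simp [Hyperbolic, roots_piMap, natDegree_piMap]

theorem coeff_piMap {i : ℕ} (hi : i ≤ d) :
    (PiMap u x).coeff (d - i) = (-1) ^ i * esym d i (repVec u x) := by
  rw [piMap_eq_multiset_prod, Multiset.prod_X_sub_C_coeff _ (by simp), Finset.esymm_map_val]
  simp [Nat.sub_sub_self hi, esym]

theorem continuous_coeff_piMap (k : ℕ) : Continuous fun x => (PiMap u x).coeff k := by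
  rcases le_or_gt k d with hk | hk
  · obtain ⟨i, hi, rfl⟩ : ∃ i ≤ d, k = d - i := ⟨d - k, by omega, by omega⟩
    simp_rw [coeff_piMap u _ hi, esym, repVec]
    fun_prop
  · simp_rw [coeff_eq_zero_of_natDegree_lt ((natDegree_piMap u _).trans_lt hk)]
    exact continuous_const

end PiMap

theorem Polynomial.Monic.coeff_eq_of_natDegree_le {R : Type*} [Semiring R] {p q : R[X]}
    (hp : p.Monic) (hq : q.Monic) (h : p.natDegree = q.natDegree) {j : ℕ}
    (hj : p.natDegree ≤ j) : p.coeff j = q.coeff j := by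
  rcases hj.eq_or_lt with rfl | hlt
  · rw [hp.coeff_natDegree, h, hq.coeff_natDegree]
  · rw [coeff_eq_zero_of_natDegree_lt hlt, coeff_eq_zero_of_natDegree_lt (h ▸ hlt)]

theorem Polynomial.Monic.abs_lt_of_isRoot {p : ℝ[X]} (hp : p.Monic) {C : ℝ}
    (hC : ∀ j < p.natDegree, |p.coeff j| ≤ C) {r : ℝ} (hr : p.IsRoot r) : |r| < C + 1 := by
  have hC0 : 0 ≤ C := by
    refine (abs_nonneg _).trans (hC 0 (Nat.pos_of_ne_zero fun h => ?_))
    simp [hp.natDegree_eq_zero.1 h] at hr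
  have hsup : (Finset.range p.natDegree).sup (‖p.coeff ·‖₊) ≤ C.toNNReal :=
    Finset.sup_le fun j hj => by
      rw [← NNReal.coe_le_coe, coe_nnnorm, Real.coe_toNNReal _ hC0]
      exact hC j (Finset.mem_range.1 hj)
  have hr' := hr.norm_lt_cauchyBound hp.ne_zero
  rw [cauchyBound, hp.leadingCoeff, nnnorm_one, div_one] at hr'
  have := NNReal.coe_lt_coe.2 (hr'.trans_le (add_le_add hsup le_rfl))
  rwa [coe_nnnorm, NNReal.coe_add, Real.coe_toNNReal _ hC0, NNReal.coe_one] at this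

section Stratum

variable {d s : ℕ} {f : ℝ[X]} {u : Composition d}

theorem mem_Vset_iff (hsd : s ≤ d) (hmon : f.Monic) (hdeg : f.natDegree = d)
    {x : Fin u.length → ℝ} :
    x ∈ Vset d s f u ↔ ∀ j, d - s ≤ j → (PiMap u x).coeff j = f.coeff j := by
  have hsign (i : ℕ) (a : ℝ) : (-1) ^ i * ((-1) ^ i * a) = a := by
    rw [← mul_assoc, ← pow_add, Even.neg_one_pow ⟨i, rfl⟩, one_mul]
  constructor
  · intro hx j hj
    rcases lt_or_ge j d with hjd | hdj
    · rw [show j = d - (d - j) by omega, coeff_piMap u x (Nat.sub_le d j),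
        hx (d - j) (by omega) (by omega), hsign]
    · exact (monic_piMap u x).coeff_eq_of_natDegree_le hmon (by rw [natDegree_piMap, hdeg])
        (by rwa [natDegree_piMap])
  · intro hx i hi his
    rw [← hx (d - i) (by omega), coeff_piMap u x (his.trans hsd), hsign]

theorem isClosed_Vset : IsClosed (Vset d s f u) := by
  simp only [Vset, Set.ofPred_forall]
  exact isClosed_iInter fun i => isClosed_iInter fun _ => isClosed_iInter fun _ =>
    isClosed_eq (by unfold esym repVec; fun_prop) continuous_const

theorem HSu_eq_image (hsd : s ≤ d) (hmon : f.Monic) (hdeg : f.natDegree = d) :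
    HSu d s f u = PiMap u '' (Vset d s f u ∩ Kset u.length) := by
  ext h
  constructor
  · rintro ⟨⟨-, -, -, hcoeff⟩, w, hwu, a, ha, rfl⟩
    obtain ⟨x, hx, hxa⟩ := exists_monotone_repVec_eq_of_compLe hwu ha.monotone
    have hPi := piMap_eq_piMap_of_repVec_eq u x hxa
    exact ⟨x, ⟨(mem_Vset_iff hsd hmon hdeg).2 (hPi ▸ hcoeff), hx⟩, hPi⟩
  · rintro ⟨x, ⟨hxV, hxK⟩, rfl⟩
    obtain ⟨w, hwu, a, ha, hax⟩ := exists_compLe_strictMono_repVec_eq hxK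
    refine ⟨⟨monic_piMap u x, natDegree_piMap u x, hyperbolic_piMap u x,
      (mem_Vset_iff hsd hmon hdeg).1 hxV⟩, w, hwu, a, ha,
      piMap_eq_piMap_of_repVec_eq u x hax.symm⟩

theorem injOn_piMap : Set.InjOn (PiMap u) (Kset u.length) := fun x hx y hy h =>
  repVec_injective u <| eq_of_monotone_of_map_univ_eq hx.repVec hy.repVec <| by
    rw [← roots_piMap, ← roots_piMap, h]

theorem coeff_eq_coeffVec (h : ℝ[X]) {j : ℕ} (hj : j < d - s) :
    h.coeff j = coeffVec d s h ⟨d - s - 1 - j, by omega⟩ := by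
  simp only [coeffVec]
  congr
  omega

theorem injOn_coeffVec (f : ℝ[X]) :
    Set.InjOn (coeffVec d s) {h | ∀ j, d - s ≤ j → h.coeff j = f.coeff j} :=
  fun p hp q hq hpq => Polynomial.ext fun j => by
    rcases lt_or_ge j (d - s) with hj | hj
    · rw [coeff_eq_coeffVec p hj, coeff_eq_coeffVec q hj, hpq]
    · rw [hp j hj, hq j hj]

theorem abs_lt_of_abs_coeff_piMap_le {x : Fin u.length → ℝ} {C : ℝ}
    (hC : ∀ j < d, |(PiMap u x).coeff j| ≤ C) (i : Fin u.length) : |x i| < C + 1 := by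
  refine (monic_piMap u x).abs_lt_of_isRoot (by rwa [natDegree_piMap]) ?_
  simp only [PiMap, IsRoot, eval_prod, eval_pow, eval_sub, eval_X, eval_C]
  exact Finset.prod_eq_zero (Finset.mem_univ i)
    (by simp [Nat.pos_iff_ne_zero.1 (u.one_le_blocksFun i)])

theorem continuous_coeffVec_piMap : Continuous fun x => coeffVec d s (PiMap u x) :=
  continuous_pi fun _ => continuous_coeff_piMap u _

theorem isCompact_Vset_inter_preimage (hsd : s ≤ d) (hmon : f.Monic) (hdeg : f.natDegree = d)
    {Q : Set (Fin (d - s) → ℝ)} (hQ : IsCompact Q) :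
    IsCompact (Vset d s f u ∩ (fun x => coeffVec d s (PiMap u x)) ⁻¹' Q) := by
  obtain ⟨R, hR⟩ := hQ.isBounded.subset_closedBall 0
  let Cf := ∑ j ∈ Finset.range d, |f.coeff j|
  have hCf : 0 ≤ Cf := Finset.sum_nonneg fun _ _ => abs_nonneg _
  refine Metric.isCompact_of_isClosed_isBounded
    (isClosed_Vset.inter (hQ.isClosed.preimage continuous_coeffVec_piMap)) ?_
  refine (Metric.isBounded_closedBall (x := 0) (r := max R Cf + 1)).subset
    fun x ⟨hxV, hxQ⟩ => ?_
  -- the low coefficients of `Π_u(x)` are bounded through `Q`, the high ones are those of `f`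
  have hC : ∀ j < d, |(PiMap u x).coeff j| ≤ max R Cf := by
    intro j hj
    rcases lt_or_ge j (d - s) with hjs | hjs
    · rw [coeff_eq_coeffVec _ hjs, ← Real.norm_eq_abs]
      exact ((norm_le_pi_norm _ _).trans (mem_closedBall_zero_iff.1 (hR hxQ))).trans
        (le_max_left _ _)
    · rw [(mem_Vset_iff hsd hmon hdeg).1 hxV j hjs]
      exact (Finset.single_le_sum (fun k _ => abs_nonneg (f.coeff k))
        (Finset.mem_range.2 hj)).trans (le_max_right _ _)
  rw [mem_closedBall_zero_iff, pi_norm_le_iff_of_nonneg (by positivity)]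
  exact fun i => (abs_lt_of_abs_coeff_piMap_le hC i).le

theorem injOn_coeffVec_piMap (hsd : s ≤ d) (hmon : f.Monic) (hdeg : f.natDegree = d) :
    Set.InjOn (fun x => coeffVec d s (PiMap u x)) (Vset d s f u ∩ Kset u.length) :=
  (injOn_coeffVec f).comp (injOn_piMap.mono Set.inter_subset_right) fun _ hx =>
    (mem_Vset_iff hsd hmon hdeg).1 hx.1

theorem isProperMap_coeffVec_piMap (hsd : s ≤ d) (hmon : f.Monic) (hdeg : f.natDegree = d) :
    IsProperMap
      ((Vset d s f u ∩ Kset u.length).domRestrict fun x => coeffVec d s (PiMap u x)) := by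
  refine isProperMap_iff_isCompact_preimage.2
    ⟨continuous_coeffVec_piMap.comp continuous_subtype_val, fun Q hQ => ?_⟩
  rw [Subtype.isCompact_iff, Set.domRestrict_eq, Set.preimage_comp, Subtype.image_preimage_coe,
    Set.inter_right_comm]
  exact (isCompact_Vset_inter_preimage hsd hmon hdeg hQ).inter_right isClosed_monotone

end Stratum

theorem stratum_closed_and_PiMap_homeomorph_general (d s : ℕ) (hsd : s ≤ d)
    (f : ℝ[X]) (hmon : f.Monic) (hdeg : f.natDegree = d)
    (u : Composition d) :
    IsClosed (strataSet d s f u) ∧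
    ∃ e : ↥(Vset d s f u ∩ Kset u.length) ≃ₜ ↥(strataSet d s f u),
      ∀ x : ↥(Vset d s f u ∩ Kset u.length),
        (e x : Fin (d - s) → ℝ) = coeffVec d s (PiMap u (x : Fin u.length → ℝ)) := by
  have hproper := isProperMap_coeffVec_piMap (u := u) hsd hmon hdeg
  have hemb : Topology.IsClosedEmbedding _ := .of_continuous_injective_isClosedMap
    hproper.continuous (injOn_coeffVec_piMap hsd hmon hdeg).injective hproper.isClosedMap
  have hrange : Set.range ((Vset d s f u ∩ Kset u.length).domRestrict
      fun x => coeffVec d s (PiMap u x)) = strataSet d s f u := by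
    rw [Set.range_domRestrict, strataSet, HSu_eq_image hsd hmon hdeg, Set.image_image]
  exact ⟨hrange ▸ hemb.isClosed_range,
    hemb.toHomeomorph.trans (Homeomorph.setCongr hrange), fun _ => rfl⟩

/-- For a composition `u` of `d` with `ℓ(u) = l`, the stratum `H_s^u(f)` (identified with
a subset of `ℝ^{d-s}` via the last `d-s` coefficients) is closed in `ℝ^{d-s}`, and
`Π_u : V_s^u(f) ∩ K_l → H_s^u(f)` is a homeomorphism. -/
theorem stratum_closed_and_PiMap_homeomorph (d s : ℕ) (hd : 1 ≤ d) (hsd : s ≤ d)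
    (f : ℝ[X]) (hmon : f.Monic) (hdeg : f.natDegree = d) (hhyp : Hyperbolic f)
    (u : Composition d) :
    IsClosed (strataSet d s f u) ∧
    ∃ e : ↥(Vset d s f u ∩ Kset u.length) ≃ₜ ↥(strataSet d s f u),
      ∀ x : ↥(Vset d s f u ∩ Kset u.length),
        (e x : Fin (d - s) → ℝ) = coeffVec d s (PiMap u (x : Fin u.length → ℝ)) :=
  stratum_closed_and_PiMap_homeomorph_general d s hsd f hmon hdeg u
end
end

section
/- If u is a composition of d with ℓ(u) ≤ s, then the stratum H_s^u(f) contains at most one polynomial. -/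
/-!
Let `M₁, M₂` be the root multisets of two polynomials in the stratum and `ℓ = ℓ(u)`. Their
counting functions `t ↦ #{r ∈ Mᵢ | r ≤ t}` take values in `S = {0} ∪ {partial sums of u}`, a set
of at most `ℓ + 1` numbers, and by Newton's identities their power sums agree up to degree
`s ≥ ℓ`. The difference `G` of the counting functions changes sign at most `ℓ - 1` times:
between two sign changes the smaller of the two counting functions must climb to a strictly
larger element of `S`. So a nonzero polynomial `R` of degree `< ℓ` has the sign of `G`.
Taking `Q' = R`, summation by parts turns `∑_{M₁} Q = ∑_{M₂} Q` into
`∑ⱼ G(zⱼ) (Q(zⱼ₊₁) - Q(zⱼ)) = 0` over consecutive support points `zⱼ`, a sum of nonnegative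
terms that are positive wherever `G(zⱼ) ≠ 0`. Hence the counting functions, and so the root
multisets, coincide.
-/

noncomputable section

open Polynomial

open Finset

namespace Multiset

section LinearOrder

variable {α : Type*} [LinearOrder α]

theorem monotone_countP_le (M : Multiset α) : Monotone fun t => M.countP (· ≤ t) :=
  fun _ _ hst => by
    simpa only [countP_eq_card_filter] using
      card_le_card (monotone_filter_right M fun _ hr => hr.trans hst)

theorem mem_of_countP_le_eq {M₁ M₂ : Multiset α}
    (h : ∀ t ∈ M₁ + M₂, M₁.countP (· ≤ t) = M₂.countP (· ≤ t))
    {a : α} (ha : a ∈ M₁) (hmax : ∀ b ∈ M₁ + M₂, b ≤ a) : a ∈ M₂ := by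
  have hcard : card M₁ = card M₂ := by
    rw [← countP_eq_card.mpr fun b hb => hmax b (mem_add.mpr (.inl hb)),
      ← countP_eq_card.mpr fun b hb => hmax b (mem_add.mpr (.inr hb)),
      h a (mem_add.mpr (.inl ha))]
  by_contra ha₂
  have hM₂ : M₂.toFinset.Nonempty := by
    rw [toFinset_nonempty]
    rintro rfl
    simp_all [card_eq_zero.mp hcard]
  obtain ⟨b, hb, hbmax⟩ := M₂.toFinset.exists_max_image id hM₂
  simp only [mem_toFinset, id] at hb hbmax
  have hba : b < a :=
    lt_of_le_of_ne (hmax b (mem_add.mpr (.inr hb))) fun hba => ha₂ (hba ▸ hb)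
  have hb₁ : M₁.countP (· ≤ b) ≠ card M₁ := fun h₁ =>
    (countP_eq_card.mp h₁ a ha).not_gt hba
  have := h b (mem_add.mpr (.inr hb))
  rw [countP_eq_card.mpr hbmax] at this
  exact hb₁ (this.trans hcard.symm)

theorem eq_of_countP_le_eq {M₁ M₂ : Multiset α}
    (h : ∀ t ∈ M₁ + M₂, M₁.countP (· ≤ t) = M₂.countP (· ≤ t)) : M₁ = M₂ := by
  induction hn : card (M₁ + M₂) using Nat.strong_induction_on generalizing M₁ M₂ with
  | _ n ih =>
  rcases eq_or_ne (M₁ + M₂) 0 with h0 | h0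
  · rw [add_eq_zero] at h0
    rw [h0.1, h0.2]
  obtain ⟨a, ha, hmax⟩ := (M₁ + M₂).toFinset.exists_max_image id (toFinset_nonempty.mpr h0)
  simp only [mem_toFinset, id] at ha hmax
  obtain ⟨ha₁, ha₂⟩ : a ∈ M₁ ∧ a ∈ M₂ := by
    rcases mem_add.mp ha with ha | ha
    · exact ⟨ha, mem_of_countP_le_eq h ha hmax⟩
    · refine ⟨mem_of_countP_le_eq (fun t ht => (h t ?_).symm) ha fun b hb => hmax b ?_, ha⟩ <;>
        rwa [add_comm]
  obtain ⟨N₁, rfl⟩ := exists_cons_of_mem ha₁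
  obtain ⟨N₂, rfl⟩ := exists_cons_of_mem ha₂
  congr 1
  refine ih (card (N₁ + N₂)) (by simp [← hn]) (fun t ht => ?_) rfl
  simpa [countP_cons] using h t (by simp [ht])

end LinearOrder

section CommRing

variable {R : Type*} [CommRing R]

theorem sum_map_pow_eq_mul_esymm_sub_sum (M : Multiset R) {k : ℕ} (hk : 0 < k) :
    (M.map (· ^ k)).sum = (-1) ^ (k + 1) * k * M.esymm k -
      ∑ a ∈ Finset.HasAntidiagonal.antidiagonal k with a.1 ∈ Set.Ioo 0 k,
        (-1) ^ a.1 * M.esymm a.1 * (M.map (· ^ a.2)).sum := by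
  classical
  have hesymm (j : ℕ) :
      MvPolynomial.aeval (fun x : M => (x : R)) (MvPolynomial.esymm M R j) = M.esymm j := by
    rw [MvPolynomial.aeval_esymm_eq_multiset_esymm, map_univ_coe]
  have hpsum (j : ℕ) :
      MvPolynomial.aeval (fun x : M => (x : R)) (MvPolynomial.psum M R j) =
        (M.map (· ^ j)).sum := by
    simp only [MvPolynomial.psum, map_sum, map_pow, MvPolynomial.aeval_X]
    exact congrArg sum (M.map_univ (· ^ j))
  have := congrArg (MvPolynomial.aeval fun x : M => (x : R))
    (MvPolynomial.psum_eq_mul_esymm_sub_sum M R k hk)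
  simpa only [map_sub, map_mul, map_pow, map_neg, map_one, map_natCast, map_sum, hesymm,
    hpsum] using this

theorem sum_map_pow_eq_of_esymm_eq {M₁ M₂ : Multiset R} {N : ℕ} (hcard : card M₁ = card M₂)
    (hesymm : ∀ k ≤ N, M₁.esymm k = M₂.esymm k) :
    ∀ k ≤ N, (M₁.map (· ^ k)).sum = (M₂.map (· ^ k)).sum := by
  intro k
  induction k using Nat.strong_induction_on with
  | _ k ih =>
  intro hk
  rcases Nat.eq_zero_or_pos k with rfl | hpos
  · simp [hcard]
  rw [sum_map_pow_eq_mul_esymm_sub_sum _ hpos, sum_map_pow_eq_mul_esymm_sub_sum _ hpos,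
    hesymm k hk]
  congr 1
  refine Finset.sum_congr rfl fun a ha => ?_
  simp only [Finset.mem_filter, Finset.HasAntidiagonal.mem_antidiagonal, Set.mem_Ioo] at ha
  rw [hesymm a.1 (by omega), ih a.2 (by omega) (by omega)]

theorem sum_map_eval_eq_of_sum_map_pow_eq {M₁ M₂ : Multiset R} {N : ℕ}
    (hpow : ∀ k ≤ N, (M₁.map (· ^ k)).sum = (M₂.map (· ^ k)).sum)
    {Q : R[X]} (hQ : Q.natDegree ≤ N) : (M₁.map Q.eval).sum = (M₂.map Q.eval).sum := by
  simp only [eval_eq_sum_range' (Nat.lt_succ_of_le hQ), sum_map_sum, sum_map_mul_left]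
  refine Finset.sum_congr rfl fun k hk => ?_
  rw [hpow k (Nat.lt_succ_iff.mp (Finset.mem_range.mp hk))]

end CommRing

end Multiset

namespace Polynomial

theorem exists_derivative_eq {K : Type*} [Field K] [CharZero K] (R : K[X]) :
    ∃ Q : K[X], derivative Q = R ∧ Q.natDegree ≤ R.natDegree + 1 := by
  refine ⟨∑ n ∈ R.support, monomial (n + 1) (R.coeff n / (n + 1)), ?_, ?_⟩
  · conv_rhs => rw [R.as_sum_support]
    rw [derivative_sum]
    refine sum_congr rfl fun n _ => ?_
    rw [derivative_monomial, Nat.add_sub_cancel]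
    congr 1
    push_cast
    field_simp
  · refine natDegree_sum_le_of_forall_le _ _ fun n hn => (natDegree_monomial_le _).trans ?_
    exact Nat.succ_le_succ (le_natDegree_of_mem_supp n hn)

theorem eval_lt_eval_of_derivative_nonneg {P : ℝ[X]} (hP : derivative P ≠ 0) {a b : ℝ}
    (hab : a < b) (h : ∀ t ∈ Set.Ioo a b, 0 ≤ (derivative P).eval t) :
    P.eval a < P.eval b := by
  have hmono : MonotoneOn P.eval (Set.Icc a b) :=
    monotoneOn_of_deriv_nonneg (convex_Icc a b) P.continuousOn P.differentiableOn
      (by simpa only [interior_Icc, Polynomial.deriv] using h)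
  have ha := Set.left_mem_Icc.2 hab.le
  have hb := Set.right_mem_Icc.2 hab.le
  refine (hmono ha hb hab.le).lt_of_ne fun heq => hP ?_
  -- `P` would be constant on `[a, b]`, so `derivative P` would vanish on all of `(a, b)`.
  refine eq_zero_of_infinite_isRoot _ ((Set.Ioo_infinite hab).mono fun t ht => ?_)
  have hconst : P.eval =ᶠ[nhds t] fun _ => P.eval a := by
    filter_upwards [Ioo_mem_nhds ht.1 ht.2] with s hs
    have hs' : s ∈ Set.Icc a b := Set.Ioo_subset_Icc_self hs
    exact le_antisymm ((hmono hs' hb hs.2.le).trans_eq heq.symm) (hmono ha hs' hs.1.le)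
  simpa [IsRoot, Polynomial.deriv] using hconst.deriv_eq

theorem mul_sub_eval_pos_of_mul_derivative_nonneg {Q : ℝ[X]} (hQ : derivative Q ≠ 0)
    {c a b : ℝ} (hc : c ≠ 0) (hab : a < b)
    (h : ∀ t ∈ Set.Ioo a b, 0 ≤ c * (derivative Q).eval t) :
    0 < c * (Q.eval b - Q.eval a) := by
  have := eval_lt_eval_of_derivative_nonneg (P := C c * Q) (by simp [hc, hQ]) hab
    (by simpa using h)
  simp only [eval_mul, eval_C] at this
  linarith [mul_sub c (Q.eval b) (Q.eval a)]

theorem Monic.coeff_natDegree_sub_eq_esymm_roots {R : Type*} [CommRing R] [IsDomain R]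
    {p : R[X]} (hp : p.Monic) (hroots : p.roots.card = p.natDegree) {k : ℕ}
    (hk : k ≤ p.natDegree) : p.coeff (p.natDegree - k) = (-1) ^ k * p.roots.esymm k := by
  rw [coeff_eq_esymm_roots_of_card hroots (Nat.sub_le _ _), hp.leadingCoeff, one_mul,
    Nat.sub_sub_self hk]

end Polynomial

theorem Finset.exists_strictMonoOn_image_range {α : Type*} [LinearOrder α] (Z : Finset α)
    (hZ : Z.Nonempty) :
    ∃ (k : ℕ) (x : ℕ → α), StrictMonoOn x (Set.Iic k) ∧ Z = (range (k + 1)).image x := by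
  obtain ⟨k, hk⟩ : ∃ k, Z.card = k + 1 := ⟨Z.card - 1, by have := hZ.card_pos; omega⟩
  set e := Z.orderEmbOfFin hk
  refine ⟨k, fun n => e ⟨min n k, by omega⟩, fun i hi j hj hij => e.strictMono ?_, ?_⟩
  · simp only [Set.mem_Iic] at hi hj
    simp [Fin.lt_def, min_eq_left hi, min_eq_left hj, hij]
  · conv_lhs => rw [← Z.image_orderEmbOfFin_univ hk]
    ext r
    simp only [mem_image, mem_univ, true_and, mem_range]
    constructor
    · rintro ⟨i, rfl⟩
      exact ⟨i, by omega, by simp [e, min_eq_left (Nat.lt_succ_iff.mp i.2)]⟩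
    · rintro ⟨n, -, rfl⟩
      exact ⟨_, rfl⟩

theorem Finset.exists_greatest_mem_of_exists {α : Type*} [LinearOrder α] {Z : Finset α}
    {P : α → Prop} [DecidablePred P] (h : ∃ z ∈ Z, P z) :
    ∃ z ∈ Z, P z ∧ ∀ w ∈ Z, z < w → ¬ P w := by
  obtain ⟨z, hz, hzmax⟩ := (Z.filter P).exists_max_image id (by simpa [Finset.Nonempty] using h)
  simp only [mem_filter, id] at hz hzmax
  exact ⟨z, hz.1, hz.2, fun w hw hzw hPw => (hzmax w ⟨hw, hPw⟩).not_gt hzw⟩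

theorem Finset.card_filter_lt_mono (S : Finset ℕ) : Monotone fun a => #{c ∈ S | c < a} :=
  fun _ _ hab => card_le_card (monotone_filter_right S fun _ _ hc => hc.trans_le hab)

theorem Finset.card_filter_lt_lt_card_filter_lt {S : Finset ℕ} {a b : ℕ} (ha : a ∈ S)
    (hab : a < b) : #{c ∈ S | c < a} < #{c ∈ S | c < b} :=
  card_lt_card ⟨monotone_filter_right S fun _ _ hc => hc.trans hab,
    fun h => lt_irrefl a (mem_filter.mp (h (mem_filter.mpr ⟨ha, hab⟩))).2⟩

theorem Finset.card_filter_lt_lt_card {S : Finset ℕ} {a : ℕ} (ha : a ∈ S) :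
    #{c ∈ S | c < a} < S.card :=
  card_lt_card (filter_ssubset.mpr ⟨a, ha, lt_irrefl a⟩)

theorem Finset.card_filter_lt_min_add_two_le {S : Finset ℕ} {a b : ℕ} (ha : a ∈ S) (hb : b ∈ S)
    (hab : a ≠ b) : #{c ∈ S | c < min a b} + 2 ≤ S.card := by
  rcases hab.lt_or_gt with h | h
  · have := card_filter_lt_lt_card_filter_lt ha h
    have := card_filter_lt_lt_card hb
    rw [min_eq_left h.le]
    omega
  · have := card_filter_lt_lt_card_filter_lt hb h
    have := card_filter_lt_lt_card ha
    rw [min_eq_right h.le]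
    omega

theorem sum_range_ite_le_sub_eq {α : Type*} [LinearOrder α] {x : ℕ → α} {k : ℕ}
    (hx : StrictMonoOn x (Set.Iic k)) (f : α → ℝ) {i : ℕ} (hi : i ≤ k) :
    ∑ j ∈ range k, (if x i ≤ x j then f (x (j + 1)) - f (x j) else 0) = f (x k) - f (x i) := by
  have hfilter : {j ∈ range k | x i ≤ x j} = Ico i k := by
    ext j
    simp only [mem_filter, mem_range, mem_Ico]
    constructor
    · rintro ⟨hj, hij⟩
      exact ⟨(hx.le_iff_le hi (Set.mem_Iic.2 hj.le)).1 hij, hj⟩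
    · rintro ⟨hij, hj⟩
      exact ⟨hj, (hx.le_iff_le hi (Set.mem_Iic.2 hj.le)).2 hij⟩
  rw [← sum_filter, hfilter, sum_Ico_eq_sub _ hi, sum_range_sub (fun j => f (x j)),
    sum_range_sub (fun j => f (x j))]
  ring

theorem Multiset.sum_map_sub_eq_sum_countP_mul {α : Type*} [LinearOrder α] {x : ℕ → α} {k : ℕ}
    (hx : StrictMonoOn x (Set.Iic k)) (f : α → ℝ) {M : Multiset α}
    (hM : ∀ r ∈ M, ∃ i ≤ k, x i = r) :
    (M.map fun r => f (x k) - f r).sum =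
      ∑ j ∈ Finset.range k, (M.countP (· ≤ x j) : ℝ) * (f (x (j + 1)) - f (x j)) := by
  induction M using Multiset.induction_on with
  | empty => simp
  | cons r M ih =>
    obtain ⟨i, hi, rfl⟩ := hM r (mem_cons_self _ _)
    rw [map_cons, sum_cons, ih fun s hs => hM s (mem_cons_of_mem hs),
      ← sum_range_ite_le_sub_eq hx f hi, ← Finset.sum_add_distrib]
    refine Finset.sum_congr rfl fun j _ => ?_
    rw [countP_cons]
    split_ifs <;> push_cast <;> ring

section SignPolynomial

variable {p q : ℝ → ℕ}

def SignMatches (p q : ℝ → ℕ) (Z : Finset ℝ) (R : ℝ[X]) : Prop :=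
  ∀ z ∈ Z, ∀ t, z ≤ t → (∀ w ∈ Z, z < w → w < t → p w = q w) →
    0 ≤ ((p z : ℝ) - q z) * R.eval t

theorem min_lt_min_of_sign_flip (hp : Monotone p) (hq : Monotone q) {z a : ℝ} (hza : z ≤ a)
    (hflip : ((p a : ℝ) - q a) * ((p z : ℝ) - q z) < 0) :
    min (p z) (q z) < min (p a) (q a) := by
  have := hp hza
  have := hq hza
  rcases mul_neg_iff.mp hflip with ⟨h₁, h₂⟩ | ⟨h₁, h₂⟩ <;>
  · simp only [sub_pos, sub_neg, Nat.cast_lt] at h₁ h₂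
    omega

theorem signMatches_insert_of_forall_eq {Z : Finset ℝ} {a : ℝ} (hZ : ∀ z ∈ Z, p z = q z) :
    SignMatches p q (insert a Z) (if q a ≤ p a then 1 else -1) := by
  intro z hz t _ _
  rcases mem_insert.mp hz with rfl | hz
  · split_ifs with h
    · simpa using (Nat.cast_le (α := ℝ)).2 h
    · simpa using (Nat.cast_lt (α := ℝ)).2 (not_le.mp h) |>.le
  · simp [hZ z hz]

theorem signMatches_insert_of_not_flip {Z : Finset ℝ} {R : ℝ[X]} (hR : SignMatches p q Z R)
    {a z : ℝ} (ha : ∀ x ∈ Z, x < a) (hz : z ∈ Z) (hpqz : p z ≠ q z)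
    (hlast : ∀ w ∈ Z, z < w → p w = q w)
    (hflip : ¬ ((p a : ℝ) - q a) * ((p z : ℝ) - q z) < 0) :
    SignMatches p q (insert a Z) R := by
  intro w hw t hwt hgap
  rcases mem_insert.mp hw with rfl | hw
  · have hzt := hR z hz t ((ha z hz).trans_le hwt).le fun v hv hzv _ => hlast v hv hzv
    have hz0 : (p z : ℝ) - q z ≠ 0 := sub_ne_zero.2 (by exact_mod_cast hpqz)
    have : 0 < ((p z : ℝ) - q z) ^ 2 := by positivity
    nlinarith
  · exact hR w hw t hwt fun v hv => hgap v (mem_insert_of_mem hv)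

theorem signMatches_insert_of_flip {Z : Finset ℝ} {R : ℝ[X]} (hR : SignMatches p q Z R)
    {a z : ℝ} (ha : ∀ x ∈ Z, x < a) (hz : z ∈ Z) (hlast : ∀ w ∈ Z, z < w → p w = q w)
    (hflip : ((p a : ℝ) - q a) * ((p z : ℝ) - q z) < 0) :
    SignMatches p q (insert a Z) (-R * (X - C a)) := by
  intro w hw t hwt hgap
  simp only [eval_mul, eval_neg, eval_sub, eval_C, eval_X]
  rcases mem_insert.mp hw with rfl | hw
  · have hzt := hR z hz t ((ha z hz).trans_le hwt).le fun v hv hzv _ => hlast v hv hzv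
    have hz0 : (p z : ℝ) - q z ≠ 0 := fun h => by simp [h] at hflip
    have : 0 < ((p z : ℝ) - q z) ^ 2 := by positivity
    have hsign : ((p w : ℝ) - q w) * R.eval t ≤ 0 := by nlinarith
    nlinarith
  · rcases le_or_gt t a with hta | hat
    · have := hR w hw t hwt fun v hv => hgap v (mem_insert_of_mem hv)
      nlinarith
    · have hpqa := hgap a (mem_insert_self a Z) (ha w hw) hat
      simp [hpqa] at hflip

/-- A root is added at each point of `Z` where the sign of `p - q` flips; across a flip
`min p q` climbs to a strictly larger element of `S`, which bounds the degree. -/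
theorem exists_signMatches (hp : Monotone p) (hq : Monotone q) {S : Finset ℕ}
    (hpS : ∀ t, p t ∈ S) (hqS : ∀ t, q t ∈ S) (Z : Finset ℝ) :
    ∃ R : ℝ[X], R ≠ 0 ∧ SignMatches p q Z R ∧
      ∀ z ∈ Z, p z ≠ q z → (∀ w ∈ Z, z < w → p w = q w) →
        R.natDegree ≤ #{c ∈ S | c < min (p z) (q z)} := by
  classical
  induction Z using Finset.induction_on_max with
  | empty => exact ⟨1, one_ne_zero, by simp [SignMatches], by simp⟩
  | insert a Z ha ih =>
  obtain ⟨R, hR, hmatch, hdeg⟩ := ih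
  by_cases hZ : ∀ z ∈ Z, p z = q z
  · refine ⟨if q a ≤ p a then 1 else -1, by split_ifs <;> simp,
      signMatches_insert_of_forall_eq hZ, fun _ _ _ _ => ?_⟩
    split_ifs <;> simp
  push Not at hZ
  obtain ⟨z, hz, hpqz, hlast⟩ := exists_greatest_mem_of_exists hZ
  simp only [ne_eq, not_not] at hlast
  have hdeg_z := hdeg z hz hpqz hlast
  by_cases hflip : ((p a : ℝ) - q a) * ((p z : ℝ) - q z) < 0
  · have hpqa : p a ≠ q a := fun h => by simp [h] at hflip
    have hminS : min (p z) (q z) ∈ S := by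
      rcases min_choice (p z) (q z) with h | h <;> rw [h]
      exacts [hpS z, hqS z]
    refine ⟨-R * (X - C a), mul_ne_zero (neg_ne_zero.2 hR) (X_sub_C_ne_zero a),
      signMatches_insert_of_flip hmatch ha hz hlast hflip, fun w hw _ hwlast => ?_⟩
    rcases mem_insert.mp hw with rfl | hw
    · rw [natDegree_mul (neg_ne_zero.2 hR) (X_sub_C_ne_zero w), natDegree_neg,
        natDegree_X_sub_C]
      exact hdeg_z.trans_lt (card_filter_lt_lt_card_filter_lt hminS
        (min_lt_min_of_sign_flip hp hq (ha z hz).le hflip))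
    · exact absurd (hwlast a (mem_insert_self a Z) (ha w hw)) hpqa
  · refine ⟨R, hR, signMatches_insert_of_not_flip hmatch ha hz hpqz hlast hflip,
      fun w hw hpqw hwlast => ?_⟩
    rcases mem_insert.mp hw with rfl | hw
    · have hzw := (ha z hz).le
      exact hdeg_z.trans (card_filter_lt_mono S (min_le_min (hp hzw) (hq hzw)))
    · exact hdeg w hw hpqw fun v hv => hwlast v (mem_insert_of_mem hv)

theorem SignMatches.nonneg_of_mem_Ioo {R : ℝ[X]} {x : ℕ → ℝ} {k : ℕ}
    (hx : StrictMonoOn x (Set.Iic k)) (hR : SignMatches p q ((range (k + 1)).image x) R)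
    {j : ℕ} (hj : j < k) {t : ℝ} (ht : t ∈ Set.Ioo (x j) (x (j + 1))) :
    0 ≤ ((p (x j) : ℝ) - q (x j)) * R.eval t := by
  refine hR (x j) (mem_image_of_mem x (by simp; omega)) t ht.1.le fun w hw hjw hwt => ?_
  obtain ⟨i, hi, rfl⟩ := mem_image.mp hw
  have hi : i ≤ k := Nat.lt_succ_iff.mp (mem_range.mp hi)
  have := (hx.lt_iff_lt (Set.mem_Iic.2 (by omega)) (Set.mem_Iic.2 hi)).1 hjw
  have := (hx.lt_iff_lt (Set.mem_Iic.2 hi) (Set.mem_Iic.2 (by omega))).1 (hwt.trans ht.2)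
  omega

end SignPolynomial

namespace Multiset

theorem countP_le_eq_of_signMatches {M₁ M₂ : Multiset ℝ} {R Q : ℝ[X]} (hR : R ≠ 0)
    (hQ : derivative Q = R) (hcard : card M₁ = card M₂)
    (hsum : (M₁.map Q.eval).sum = (M₂.map Q.eval).sum)
    (hmatch : SignMatches (fun t => M₁.countP (· ≤ t)) (fun t => M₂.countP (· ≤ t))
      (M₁ + M₂).toFinset R) :
    ∀ t ∈ M₁ + M₂, M₁.countP (· ≤ t) = M₂.countP (· ≤ t) := by
  set p : ℝ → ℕ := fun t => M₁.countP (· ≤ t)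
  set q : ℝ → ℕ := fun t => M₂.countP (· ≤ t)
  intro t ht
  obtain ⟨k, x, hx, hZ⟩ :=
    (M₁ + M₂).toFinset.exists_strictMonoOn_image_range ⟨t, mem_toFinset.mpr ht⟩
  have hmem : ∀ r ∈ M₁ + M₂, ∃ i ≤ k, x i = r := fun r hr => by
    obtain ⟨i, hi, rfl⟩ := Finset.mem_image.mp (hZ ▸ mem_toFinset.mpr hr)
    exact ⟨i, Nat.lt_succ_iff.mp (Finset.mem_range.mp hi), rfl⟩
  have hxk : p (x k) = q (x k) := by
    have hle : ∀ r ∈ M₁ + M₂, r ≤ x k := fun r hr => by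
      obtain ⟨i, hi, rfl⟩ := hmem r hr
      exact hx.monotoneOn (Set.mem_Iic.2 hi) (Set.mem_Iic.2 le_rfl) hi
    simp only [p, q, countP_eq_card.mpr fun r hr => hle r (mem_add.mpr (.inl hr)),
      countP_eq_card.mpr fun r hr => hle r (mem_add.mpr (.inr hr)), hcard]
  have habel : ∑ j ∈ Finset.range k,
      ((p (x j) : ℝ) - q (x j)) * (Q.eval (x (j + 1)) - Q.eval (x j)) = 0 := by
    have e₁ := sum_map_sub_eq_sum_countP_mul hx Q.eval fun r hr => hmem r (mem_add.mpr (.inl hr))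
    have e₂ := sum_map_sub_eq_sum_countP_mul hx Q.eval fun r hr => hmem r (mem_add.mpr (.inr hr))
    rw [sum_map_sub, map_const', sum_replicate] at e₁ e₂
    simp only [sub_mul, Finset.sum_sub_distrib, p, q, ← e₁, ← e₂, hcard, hsum, sub_self]
  have hterm : ∀ j < k, p (x j) ≠ q (x j) →
      0 < ((p (x j) : ℝ) - q (x j)) * (Q.eval (x (j + 1)) - Q.eval (x j)) := by
    intro j hj hpq
    refine mul_sub_eval_pos_of_mul_derivative_nonneg (hQ ▸ hR)
      (sub_ne_zero.2 (by exact_mod_cast hpq))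
      ((hx.lt_iff_lt (Set.mem_Iic.2 (by omega)) (Set.mem_Iic.2 (by omega))).2 j.lt_succ_self)
      fun t ht => hQ ▸ (hZ ▸ hmatch).nonneg_of_mem_Ioo hx hj ht
  by_contra hne
  refine habel.not_gt (Finset.sum_pos' (fun j hj => ?_) ?_)
  · by_cases hpq : p (x j) = q (x j)
    · simp [hpq]
    · exact (hterm j (Finset.mem_range.mp hj) hpq).le
  · obtain ⟨j, hj, rfl⟩ := hmem t ht
    have hjk : j ≠ k := by rintro rfl; exact hne hxk
    exact ⟨j, Finset.mem_range.mpr (by omega), hterm j (by omega) hne⟩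

theorem eq_of_countP_le_mem_of_sum_map_pow_eq {M₁ M₂ : Multiset ℝ} {S : Finset ℕ} {N : ℕ}
    (hS : S.card ≤ N + 1) (h₁ : ∀ t, M₁.countP (· ≤ t) ∈ S) (h₂ : ∀ t, M₂.countP (· ≤ t) ∈ S)
    (hpow : ∀ k ≤ N, (M₁.map (· ^ k)).sum = (M₂.map (· ^ k)).sum) : M₁ = M₂ := by
  refine eq_of_countP_le_eq ?_
  obtain ⟨R, hR, hmatch, hdeg⟩ := exists_signMatches M₁.monotone_countP_le
    M₂.monotone_countP_le h₁ h₂ (M₁ + M₂).toFinset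
  by_contra hne
  push Not at hne
  obtain ⟨z, hz, hpqz, hlast⟩ := Finset.exists_greatest_mem_of_exists
    (Z := (M₁ + M₂).toFinset) (by simpa using hne)
  simp only [not_not] at hlast
  have hRdeg : R.natDegree + 1 ≤ N := by
    have := hdeg z hz hpqz hlast
    have := Finset.card_filter_lt_min_add_two_le (h₁ z) (h₂ z) hpqz
    omega
  obtain ⟨Q, hQ, hQdeg⟩ := R.exists_derivative_eq
  exact hpqz (countP_le_eq_of_signMatches hR hQ (by simpa using hpow 0 (Nat.zero_le N))
    (sum_map_eval_eq_of_sum_map_pow_eq hpow (by omega)) hmatch z (mem_toFinset.mp hz))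

end Multiset

theorem Monotone.le_iff_lt_card_filter_le {α : Type*} [LinearOrder α] {n : ℕ} {a : Fin n → α}
    (ha : Monotone a) (t : α) (i : Fin n) : a i ≤ t ↔ (i : ℕ) < #{j | a j ≤ t} := by
  constructor
  · intro hi
    have := card_le_card fun j (hj : j ∈ Iic i) =>
      mem_filter.mpr ⟨mem_univ j, (ha (mem_Iic.mp hj)).trans hi⟩
    rw [Fin.card_Iic] at this
    omega
  · intro hi
    by_contra hit
    have := card_le_card fun j (hj : j ∈ ({j | a j ≤ t} : Finset (Fin n))) =>
      mem_Iio.mpr (lt_of_not_ge fun hij => hit ((ha hij).trans (mem_filter.mp hj).2))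
    rw [Fin.card_Iio] at this
    omega

namespace Composition

variable {d : ℕ}

theorem sum_blocksFun_filter_lt (w : Composition d) (m : ℕ) :
    ∑ i : Fin w.length with i.val < m, w.blocksFun i = w.sizeUpTo m := by
  induction m with
  | zero => simp [sizeUpTo_zero]
  | succ m ih =>
    rcases lt_or_ge m w.length with hm | hm
    · have : (univ.filter fun i : Fin w.length => i.val < m + 1) =
          insert ⟨m, hm⟩ (univ.filter fun i : Fin w.length => i.val < m) := by
        ext i
        simp [Fin.ext_iff]
        omega
      rw [w.sizeUpTo_succ hm, ← ih, this, sum_insert (by simp), add_comm]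
      rfl
    · rw [show w.sizeUpTo (m + 1) = w.sizeUpTo m by
        rw [w.sizeUpTo_ofLength_le m hm, w.sizeUpTo_ofLength_le _ (by omega)], ← ih]
      congr 1
      ext i
      simp only [mem_filter, mem_univ, true_and]
      omega

theorem card_insert_zero_sums_le (u : Composition d) : (insert 0 u.sums).card ≤ u.length + 1 :=
  (card_insert_le _ _).trans (Nat.succ_le_succ (card_image_le.trans (card_range _).le))

end Composition

namespace HasComposition

variable {d : ℕ} {h : ℝ[X]} {w : Composition d}

theorem exists_countP_roots_le_eq_sizeUpTo (hw : HasComposition h w) (t : ℝ) :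
    ∃ m ≤ w.length, h.roots.countP (· ≤ t) = w.sizeUpTo m := by
  obtain ⟨a, ha, rfl⟩ := hw
  refine ⟨#{i | a i ≤ t}, (card_le_univ _).trans (Fintype.card_fin _).le, ?_⟩
  rw [roots_prod _ _ (prod_ne_zero_iff.mpr fun i _ => pow_ne_zero _ (X_sub_C_ne_zero _)),
    ← w.sum_blocksFun_filter_lt]
  simp only [roots_pow, roots_X_sub_C, Multiset.countP_eq_card_filter, Multiset.filter_bind,
    Multiset.card_bind]
  rw [← sum_eq_multiset_sum, sum_filter]
  refine sum_congr rfl fun i _ => ?_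
  simp only [← ha.monotone.le_iff_lt_card_filter_le t]
  split_ifs with hi <;> simp [Multiset.filter_nsmul, Multiset.filter_singleton, hi]

theorem countP_roots_le_mem {u : Composition d} (hw : HasComposition h w) (hle : CompLe w u)
    (t : ℝ) : h.roots.countP (· ≤ t) ∈ insert 0 u.sums := by
  obtain ⟨m, hm, hcount⟩ := hw.exists_countP_roots_le_eq_sizeUpTo t
  rw [hcount]
  rcases Nat.eq_zero_or_pos m with rfl | hm₀
  · simp [Composition.sizeUpTo_zero]
  · refine mem_insert_of_mem (hle (mem_image.mpr ⟨m - 1, mem_range.mpr (by omega), ?_⟩))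
    rw [Nat.sub_add_cancel hm₀]

end HasComposition

theorem stratum_subsingleton_of_length_le_general (d s : ℕ)
    (f : ℝ[X])
    (u : Composition d) (hu : u.length ≤ s) :
    (HSu d s f u).Subsingleton := by
  rintro h₁ ⟨⟨hmon₁, hdeg₁, hhyp₁, hcoeff₁⟩, w₁, hle₁, hw₁⟩
    h₂ ⟨⟨hmon₂, hdeg₂, hhyp₂, hcoeff₂⟩, w₂, hle₂, hw₂⟩
  have hesymm : ∀ k ≤ u.length, h₁.roots.esymm k = h₂.roots.esymm k := fun k hk => by
    have hkd : k ≤ d := hk.trans u.length_le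
    have h₁k := hmon₁.coeff_natDegree_sub_eq_esymm_roots hhyp₁ (hdeg₁ ▸ hkd)
    have h₂k := hmon₂.coeff_natDegree_sub_eq_esymm_roots hhyp₂ (hdeg₂ ▸ hkd)
    rw [hdeg₁, hcoeff₁ _ (by omega), ← hcoeff₂ _ (by omega), ← hdeg₂, h₂k] at h₁k
    exact mul_right_injective₀ (pow_ne_zero k (neg_ne_zero.2 one_ne_zero)) h₁k.symm
  have hroots : h₁.roots = h₂.roots :=
    Multiset.eq_of_countP_le_mem_of_sum_map_pow_eq u.card_insert_zero_sums_le
      (hw₁.countP_roots_le_mem hle₁) (hw₂.countP_roots_le_mem hle₂)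
      (Multiset.sum_map_pow_eq_of_esymm_eq
        (hhyp₁.trans ((hdeg₁.trans hdeg₂.symm).trans hhyp₂.symm)) hesymm)
  rw [← prod_multiset_X_sub_C_of_monic_of_roots_card_eq hmon₁ hhyp₁, hroots,
    prod_multiset_X_sub_C_of_monic_of_roots_card_eq hmon₂ hhyp₂]

/-- If `u` is a composition of `d` with `ℓ(u) ≤ s`, then the stratum `H_s^u(f)` contains
at most one polynomial. -/
theorem stratum_subsingleton_of_length_le (d s : ℕ) (hd : 1 ≤ d) (hsd : s ≤ d)
    (f : ℝ[X]) (hmon : f.Monic) (hdeg : f.natDegree = d) (hhyp : Hyperbolic f)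
    (u : Composition d) (hu : u.length ≤ s) :
    (HSu d s f u).Subsingleton :=
  stratum_subsingleton_of_length_le_general d s f u hu
end
end

section
/- If s ≥ 2 and the stratum H_s^u(f) is at least one dimensional, then H_s^u(f) is compact and, moreover, the stratum H_s^{(d)}(f) labelled by the composition (d) is empty (so the lattice of strata of H_s^u(f) contains the empty stratum). -/
noncomputable section

open Polynomial

/-- `DimGe S n` : `S ⊆ ℝ^m` contains a nonempty relatively open subset which is
homeomorphic to an open subset of `ℝ^n`. -/
def DimGe {m : ℕ} (S : Set (Fin m → ℝ)) (n : ℕ) : Prop :=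
  ∃ U : Set (Fin m → ℝ), U.Nonempty ∧ U ⊆ S ∧
    IsOpen {x : S | (x : Fin m → ℝ) ∈ U} ∧
    ∃ V : Set (Fin n → ℝ), IsOpen V ∧ Nonempty (U ≃ₜ V)

/-- `HasDim S n` : the dimension of `S` is `n ∈ ℤ`, i.e. `n` is the largest integer such
that `S` contains a (relatively) open subset homeomorphic to an open subset of `ℝ^n`,
with the convention that the empty set has dimension `-1`. -/
def HasDim {m : ℕ} (S : Set (Fin m → ℝ)) (n : ℤ) : Prop :=
  (S = ∅ ∧ n = -1) ∨
    (0 ≤ n ∧ DimGe S n.toNat ∧ ∀ k : ℕ, DimGe S k → (k : ℤ) ≤ n)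

/-!
Fixing `h₁` and `h₂` fixes the sum and the sum of squares of the roots, so for `s ≥ 2` all roots
of all members of `H_s(f)` lie in a fixed interval `[-B, B]`. The stratum `H_s^u(f)` is the union,
over the finitely many compositions `w ≤ u`, of the images under the (polynomial, hence continuous)
coefficient map of the compact sets of monotone root vectors `b ∈ [-B, B]^ℓ(w)` with
`∏ (t - bᵢ)^wᵢ ∈ H_s(f)`; a monotone root vector with ties only produces a coarser composition, so
these images stay inside the stratum. Hence the stratum is compact.

If `(t - c)ᵈ ∈ H_s(f)`, then `∑ (r - c)²` over the roots `r` of any `h ∈ H_s(f)` is the same as for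
`(t - c)ᵈ`, namely `0`, so `H_s(f)` is a single point and no stratum has dimension `≥ 1`.
-/

namespace Multiset
variable {R : Type*} [CommRing R]

lemma esymm_one (s : Multiset R) : s.esymm 1 = s.sum := by
  simp [esymm, powersetCard_one, map_map]

lemma esymm_cons_succ (a : R) (s : Multiset R) (n : ℕ) :
    (a ::ₘ s).esymm (n + 1) = s.esymm (n + 1) + a * s.esymm n := by
  simp [esymm, powersetCard_cons, map_map, sum_map_mul_left]

lemma sum_map_sq (s : Multiset R) : (s.map (· ^ 2)).sum = s.sum ^ 2 - 2 * s.esymm 2 := by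
  induction s using Multiset.induction with
  | empty => simp [esymm, powersetCard_zero_right]
  | cons a s ih =>
    rw [esymm_cons_succ, esymm_one]
    simp only [map_cons, sum_cons, ih]
    ring

lemma sum_map_sub_sq (s : Multiset R) (c : R) :
    (s.map fun r => (r - c) ^ 2).sum = (s.map (· ^ 2)).sum - 2 * c * s.sum + card s * c ^ 2 := by
  induction s using Multiset.induction with
  | empty => simp
  | cons a s ih =>
    simp only [map_cons, sum_cons, ih, card_cons]
    push_cast
    ring

end Multiset

namespace Polynomial.Monic
variable {R : Type*} [CommRing R] [IsDomain R] {p : R[X]}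

lemma sum_roots_eq_neg_coeff (hp : p.Monic) (hroots : p.roots.card = p.natDegree)
    (h1 : 1 ≤ p.natDegree) : p.roots.sum = -p.coeff (p.natDegree - 1) := by
  rw [coeff_eq_esymm_roots_of_card hroots (Nat.sub_le _ _), hp.leadingCoeff,
    Nat.sub_sub_self h1, Multiset.esymm_one]
  ring

lemma sum_sq_roots_eq (hp : p.Monic) (hroots : p.roots.card = p.natDegree)
    (h2 : 2 ≤ p.natDegree) :
    (p.roots.map (· ^ 2)).sum = p.coeff (p.natDegree - 1) ^ 2 - 2 * p.coeff (p.natDegree - 2) := by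
  rw [Multiset.sum_map_sq, hp.sum_roots_eq_neg_coeff hroots (by omega),
    coeff_eq_esymm_roots_of_card hroots (k := p.natDegree - 2) (Nat.sub_le _ _), hp.leadingCoeff,
    Nat.sub_sub_self h2]
  ring

end Polynomial.Monic

section Hset
variable {d s : ℕ} {f h : ℝ[X]}

lemma card_roots_of_mem_Hset (hh : h ∈ Hset d s f) : h.roots.card = d :=
  hh.2.2.1.trans hh.2.1

lemma sum_roots_of_mem_Hset (hh : h ∈ Hset d s f) (hs : 1 ≤ s) (hsd : s ≤ d) :
    h.roots.sum = -f.coeff (d - 1) := by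
  obtain ⟨hmon, hdeg, hhyp, hcoeff⟩ := hh
  rw [hmon.sum_roots_eq_neg_coeff hhyp (by omega), hdeg, hcoeff _ (by omega)]

lemma sum_sq_roots_of_mem_Hset (hh : h ∈ Hset d s f) (hs : 2 ≤ s) (hsd : s ≤ d) :
    (h.roots.map (· ^ 2)).sum = f.coeff (d - 1) ^ 2 - 2 * f.coeff (d - 2) := by
  obtain ⟨hmon, hdeg, hhyp, hcoeff⟩ := hh
  rw [hmon.sum_sq_roots_eq hhyp (by omega), hdeg, hcoeff _ (by omega), hcoeff _ (by omega)]

lemma abs_le_of_mem_roots_of_mem_Hset (hh : h ∈ Hset d s f) (hs : 2 ≤ s) (hsd : s ≤ d)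
    {r : ℝ} (hr : r ∈ h.roots) : |r| ≤ √(f.coeff (d - 1) ^ 2 - 2 * f.coeff (d - 2)) := by
  refine Real.abs_le_sqrt ?_
  rw [← sum_sq_roots_of_mem_Hset hh hs hsd]
  exact Multiset.single_le_sum (Multiset.forall_mem_map_iff.2 fun _ _ => sq_nonneg _) _
    (Multiset.mem_map_of_mem _ hr)

/-- As `h₁`, `h₂` are fixed, so is `∑ (r - c)²` over the roots; it vanishes for `(X - c)ᵈ`. -/
lemma eq_X_sub_C_pow_of_mem_Hset {c : ℝ} (hc : (X - C c) ^ d ∈ Hset d s f)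
    (hh : h ∈ Hset d s f) (hs : 2 ≤ s) (hsd : s ≤ d) : h = (X - C c) ^ d := by
  have hdev : ∀ g ∈ Hset d s f, (g.roots.map fun r => (r - c) ^ 2).sum =
      f.coeff (d - 1) ^ 2 - 2 * f.coeff (d - 2) + 2 * c * f.coeff (d - 1) + d * c ^ 2 := by
    intro g hg
    rw [Multiset.sum_map_sub_sq, sum_sq_roots_of_mem_Hset hg hs hsd,
      sum_roots_of_mem_Hset hg (by omega) hsd, card_roots_of_mem_Hset hg]
    ring
  have hzero : (h.roots.map fun r => (r - c) ^ 2).sum = 0 := by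
    rw [hdev h hh, ← hdev _ hc, roots_pow, roots_X_sub_C, Multiset.nsmul_singleton]
    simp
  have hroots : h.roots = Multiset.replicate d c := by
    refine Multiset.eq_replicate.2 ⟨card_roots_of_mem_Hset hh, fun r hr => ?_⟩
    have := Multiset.single_le_sum (Multiset.forall_mem_map_iff.2 fun _ _ => sq_nonneg _) _
      (Multiset.mem_map_of_mem (fun r => (r - c) ^ 2) hr)
    nlinarith [sq_nonneg (r - c)]
  rw [← prod_multiset_X_sub_C_of_monic_of_roots_card_eq hh.1 hh.2.2.1, hroots]
  simp

end Hset

namespace List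
variable {α : Type*}

def mergeRuns [DecidableEq α] : List (α × ℕ) → List (α × ℕ)
  | [] => []
  | [p] => [p]
  | p :: q :: t => if p.1 = q.1 then mergeRuns ((p.1, p.2 + q.2) :: t) else p :: mergeRuns (q :: t)
termination_by l => l.length

variable [DecidableEq α]

lemma prod_map_pow_mergeRuns {M : Type*} [Monoid M] (g : α → M) (l : List (α × ℕ)) :
    ((mergeRuns l).map fun p => g p.1 ^ p.2).prod = (l.map fun p => g p.1 ^ p.2).prod := by
  induction l using mergeRuns.induct with
  | case1 | case2 => simp [mergeRuns]
  | case3 p q t heq ih =>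
    rw [mergeRuns, if_pos heq, ih]
    simp [heq, pow_add, mul_assoc]
  | case4 p q t hne ih => simp_all [mergeRuns]

lemma sum_map_snd_mergeRuns (l : List (α × ℕ)) :
    ((mergeRuns l).map Prod.snd).sum = (l.map Prod.snd).sum := by
  induction l using mergeRuns.induct with
  | case1 | case2 => simp [mergeRuns]
  | case3 p q t heq ih => rw [mergeRuns, if_pos heq, ih]; simp [add_assoc]
  | case4 p q t hne ih => simp_all [mergeRuns]

lemma pos_of_mem_mergeRuns {l : List (α × ℕ)} (hl : ∀ p ∈ l, 0 < p.2) :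
    ∀ p ∈ mergeRuns l, 0 < p.2 := by
  induction l using mergeRuns.induct with
  | case1 | case2 => simp_all [mergeRuns]
  | case3 p q t heq ih =>
    rw [mergeRuns, if_pos heq]
    simp only [mem_cons, forall_eq_or_imp] at hl ⊢ ih
    exact ih ⟨Nat.add_pos_left hl.1 _, hl.2.2⟩
  | case4 p q t hne ih =>
    rw [mergeRuns, if_neg hne]
    simp only [mem_cons, forall_eq_or_imp] at hl ⊢ ih
    exact ⟨hl.1, ih hl.2⟩

lemma fst_mem_of_mem_mergeRuns {l : List (α × ℕ)} :
    ∀ p ∈ mergeRuns l, p.1 ∈ l.map Prod.fst := by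
  induction l using mergeRuns.induct with
  | case1 | case2 => simp [mergeRuns]
  | case3 p q t heq ih =>
    rw [mergeRuns, if_pos heq]
    intro r hr
    have := ih r hr
    simp only [map_cons, mem_cons] at this ⊢
    tauto
  | case4 p q t hne ih =>
    rw [mergeRuns, if_neg hne]
    intro r hr
    rcases mem_cons.1 hr with rfl | hr
    · simp
    · exact mem_cons_of_mem _ (ih r hr)

lemma pairwise_lt_map_fst_mergeRuns [LinearOrder α] {l : List (α × ℕ)}
    (hl : (l.map Prod.fst).Pairwise (· ≤ ·)) :
    ((mergeRuns l).map Prod.fst).Pairwise (· < ·) := by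
  induction l using mergeRuns.induct with
  | case1 | case2 => simp [mergeRuns]
  | case3 p q t heq ih =>
    rw [mergeRuns, if_pos heq]
    simp only [map_cons, pairwise_cons, mem_cons, forall_eq_or_imp] at hl ih
    exact ih ⟨hl.1.2, hl.2.2⟩
  | case4 p q t hne ih =>
    rw [mergeRuns, if_neg hne, map_cons, pairwise_cons]
    rw [map_cons, pairwise_cons] at hl
    have hpq : p.1 < q.1 := lt_of_le_of_ne (hl.1 _ mem_cons_self) hne
    refine ⟨fun r hr => ?_, ih hl.2⟩
    obtain ⟨x, hx, rfl⟩ := mem_map.1 hr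
    rcases mem_cons.1 (fst_mem_of_mem_mergeRuns x hx) with h | h
    · rwa [h]
    · exact hpq.trans_le ((pairwise_cons.1 hl.2).1 _ h)

lemma exists_sum_take_eq_sum_take_mergeRuns (l : List (α × ℕ)) :
    ∀ i < (mergeRuns l).length, ∃ j < l.length,
      ((l.map Prod.snd).take (j + 1)).sum = (((mergeRuns l).map Prod.snd).take (i + 1)).sum := by
  induction l using mergeRuns.induct with
  | case1 => simp [mergeRuns]
  | case2 p => simp [mergeRuns]
  | case3 p q t heq ih =>
    rw [mergeRuns, if_pos heq]
    intro i hi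
    obtain ⟨j, hj, hsum⟩ := ih i hi
    refine ⟨j + 1, by simpa using hj, ?_⟩
    simp only [map_cons, take_succ_cons, sum_cons] at hsum ⊢
    omega
  | case4 p q t hne ih =>
    rw [mergeRuns, if_neg hne]
    rintro (_ | i) hi
    · exact ⟨0, by simp, by simp⟩
    · obtain ⟨j, hj, hsum⟩ := ih i (by simpa using hi)
      refine ⟨j + 1, by simpa using hj, ?_⟩
      simp only [map_cons, take_succ_cons, sum_cons] at hsum ⊢
      omega

end List

lemma continuous_coeff_prod_X_sub_C_pow {R ι : Type*} [CommRing R] [TopologicalSpace R]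
    [IsTopologicalRing R] [Fintype ι] (m : ι → ℕ) (j : ℕ) :
    Continuous fun b : ι → R => (∏ i, (X - C (b i)) ^ m i).coeff j := by
  let Q : (MvPolynomial ι R)[X] := ∏ i, (X - C (MvPolynomial.X i)) ^ m i
  have hQ : ∀ b : ι → R, ∏ i, (X - C (b i)) ^ m i = Q.map (MvPolynomial.eval b) := by
    intro b
    simp [Q, Polynomial.map_prod]
  simp only [hQ, coeff_map]
  exact MvPolynomial.continuous_eval _

namespace Composition
variable {d s : ℕ} {f : ℝ[X]}

def rootPoly (w : Composition d) (b : Fin w.length → ℝ) : ℝ[X] :=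
  ∏ i, (X - C (b i)) ^ w.blocksFun i

section
variable (w : Composition d) (b : Fin w.length → ℝ)

lemma monic_rootPoly : (w.rootPoly b).Monic :=
  monic_prod_of_monic _ _ fun _ _ => (monic_X_sub_C _).pow _

lemma natDegree_rootPoly : (w.rootPoly b).natDegree = d := by
  rw [rootPoly, natDegree_prod_of_monic _ _ fun _ _ => (monic_X_sub_C _).pow _]
  simp [w.sum_blocksFun]

lemma hyperbolic_rootPoly : Hyperbolic (w.rootPoly b) :=
  splits_iff_card_roots.1 (Splits.prod fun _ _ => (Splits.X_sub_C _).pow _)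

lemma mem_roots_rootPoly (i : Fin w.length) : b i ∈ (w.rootPoly b).roots := by
  rw [mem_roots (w.monic_rootPoly b).ne_zero, IsRoot.def, rootPoly, eval_prod]
  exact Finset.prod_eq_zero (Finset.mem_univ i)
    (by simp [Nat.one_le_iff_ne_zero.1 (w.one_le_blocksFun i)])

lemma rootPoly_mem_Hset_iff :
    w.rootPoly b ∈ Hset d s f ↔ ∀ j, d - s ≤ j → (w.rootPoly b).coeff j = f.coeff j :=
  ⟨fun h => h.2.2.2, fun h =>
    ⟨w.monic_rootPoly b, w.natDegree_rootPoly b, w.hyperbolic_rootPoly b, h⟩⟩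

end

lemma rootPoly_eq_prod_ofFn (w : Composition d) (b : Fin w.length → ℝ) :
    w.rootPoly b =
      ((List.ofFn fun i => (b i, w.blocksFun i)).map fun p => (X - C p.1) ^ p.2).prod := by
  rw [rootPoly, List.map_ofFn, List.prod_ofFn]
  rfl

lemma exists_compLe_hasComposition_rootPoly (w : Composition d) {b : Fin w.length → ℝ}
    (hb : Monotone b) :
    ∃ w' : Composition d, CompLe w' w ∧ HasComposition (w.rootPoly b) w' := by
  classical
  set l := List.ofFn fun i => (b i, w.blocksFun i) with hl
  have hl_fst : l.map Prod.fst = List.ofFn b := by rw [hl, List.map_ofFn]; rfl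
  have hl_snd : l.map Prod.snd = w.blocks := by rw [hl, List.map_ofFn]; exact w.ofFn_blocksFun
  set l' := l.mergeRuns
  have hpos : ∀ p ∈ l', 0 < p.2 := List.pos_of_mem_mergeRuns fun p hp => by
    obtain ⟨i, rfl⟩ := List.mem_ofFn.1 hp
    exact w.one_le_blocksFun i
  let w' : Composition d :=
    ⟨l'.map Prod.snd, fun {_} hi => List.forall_mem_map.2 hpos _ hi,
      by rw [List.sum_map_snd_mergeRuns, hl_snd, w.blocks_sum]⟩
  have hlen : l'.length = w'.length := (List.length_map _).symm
  have hsorted : (l'.map Prod.fst).Pairwise (· < ·) :=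
    List.pairwise_lt_map_fst_mergeRuns (hl_fst ▸ hb.sortedLE_ofFn.pairwise)
  let c : Fin w'.length → ℝ :=
    fun j => (l'.map Prod.fst)[j]'(by rw [List.length_map, hlen]; exact j.2)
  refine ⟨w', ?_, c, ?_, ?_⟩
  · intro n hn
    simp only [Composition.sums, Finset.mem_image, Finset.mem_range] at hn ⊢
    obtain ⟨i, hi, rfl⟩ := hn
    obtain ⟨j, hj, hsum⟩ := List.exists_sum_take_eq_sum_take_mergeRuns l i (hlen ▸ hi)
    refine ⟨j, by rwa [Composition.length, ← hl_snd, List.length_map], ?_⟩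
    simp only [Composition.sizeUpTo, ← hl_snd, hsum]
    rfl
  · intro i j hij
    exact List.pairwise_iff_getElem.1 hsorted _ _ _ _ hij
  · rw [rootPoly_eq_prod_ofFn, ← hl, ← List.prod_map_pow_mergeRuns (fun a => X - C a)]
    conv_lhs => rw [← List.ofFn_getElem (xs := l.mergeRuns), List.map_ofFn, List.prod_ofFn]
    exact Fintype.prod_equiv (finCongr hlen) _ _ fun j => by simp [w', l', c, Composition.blocksFun]

end Composition

def rootParams (d s : ℕ) (f : ℝ[X]) (w : Composition d) : Set (Fin w.length → ℝ) :=
  {b | Monotone b ∧ w.rootPoly b ∈ Hset d s f}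

section rootParams
variable {d s : ℕ} {f : ℝ[X]}

lemma isClosed_rootParams (w : Composition d) : IsClosed (rootParams d s f w) := by
  simp only [rootParams, Composition.rootPoly_mem_Hset_iff, Set.ofPred_and, Set.ofPred_forall]
  exact isClosed_monotone.inter <| isClosed_iInter fun j => isClosed_iInter fun _ =>
    isClosed_eq (continuous_coeff_prod_X_sub_C_pow _ j) continuous_const

lemma isCompact_rootParams (hs : 2 ≤ s) (hsd : s ≤ d) (w : Composition d) :
    IsCompact (rootParams d s f w) := by
  refine (isCompact_closedBall 0 √(f.coeff (d - 1) ^ 2 - 2 * f.coeff (d - 2))).of_isClosed_subset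
    (isClosed_rootParams w) fun b hb => ?_
  rw [mem_closedBall_zero_iff, pi_norm_le_iff_of_nonneg (Real.sqrt_nonneg _)]
  exact fun i => abs_le_of_mem_roots_of_mem_Hset hb.2 hs hsd (w.mem_roots_rootPoly b i)

lemma strataSet_eq_iUnion (u : Composition d) :
    strataSet d s f u =
      ⋃ (w : Composition d) (_ : CompLe w u),
        coeffVec d s ∘ w.rootPoly '' rootParams d s f w := by
  ext x
  simp only [strataSet, Set.mem_image, Set.mem_iUnion, Function.comp_apply]
  constructor
  · rintro ⟨h, ⟨hH, w, hwu, a, ha, rfl⟩, rfl⟩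
    exact ⟨w, hwu, a, ⟨ha.monotone, hH⟩, rfl⟩
  · rintro ⟨w, hwu, b, ⟨hb, hH⟩, rfl⟩
    obtain ⟨w', hw'w, hcomp⟩ := w.exists_compLe_hasComposition_rootPoly hb
    exact ⟨w.rootPoly b, ⟨hH, w', hw'w.trans hwu, hcomp⟩, rfl⟩

lemma isCompact_strataSet (hs : 2 ≤ s) (hsd : s ≤ d) (u : Composition d) :
    IsCompact (strataSet d s f u) := by
  rw [strataSet_eq_iUnion]
  exact isCompact_iUnion fun w => isCompact_iUnion fun _ =>
    (isCompact_rootParams hs hsd w).image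
      (continuous_pi fun i => continuous_coeff_prod_X_sub_C_pow _ _)

end rootParams

lemma CompLe.eq_single {d : ℕ} (hd : 0 < d) {w : Composition d}
    (hw : CompLe w (Composition.single d hd)) : w = Composition.single d hd := by
  rw [Composition.eq_single_iff_length]
  by_contra hlen
  have hlen2 : 1 < w.length := by have := w.length_pos_of_pos hd; omega
  obtain ⟨i, hi, hsize⟩ :=
    Finset.mem_image.1 (hw (Finset.mem_image.2 ⟨0, Finset.mem_range.2 (by omega), rfl⟩))
  rw [Finset.mem_range, Composition.single_length, Nat.lt_one_iff] at hi
  subst hi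
  rw [zero_add] at hsize
  have hsingle : (Composition.single d hd).sizeUpTo 1 = d := by
    simpa using (Composition.single d hd).sizeUpTo_length
  have := w.sizeUpTo_strict_mono hlen2
  have := w.sizeUpTo_le (1 + 1)
  omega

lemma HasComposition.exists_eq_X_sub_C_pow {d : ℕ} (hd : 0 < d) {h : ℝ[X]}
    (hh : HasComposition h (Composition.single d hd)) : ∃ c, h = (X - C c) ^ d := by
  obtain ⟨a, -, rfl⟩ := hh
  have : Subsingleton (Fin (Composition.single d hd).length) :=
    Fin.subsingleton_iff_le_one.2 (by simp)
  refine ⟨a ⟨0, by simp⟩, ?_⟩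
  rw [Fintype.prod_subsingleton _ ⟨0, by simp⟩, Composition.single_blocksFun]

lemma Hset_subsingleton_of_mem_HSu_single {d s : ℕ} (hd : 0 < d) {f h : ℝ[X]}
    (hh : h ∈ HSu d s f (Composition.single d hd)) (hs : 2 ≤ s) (hsd : s ≤ d) :
    (Hset d s f).Subsingleton := by
  obtain ⟨hhH, w, hw, hcomp⟩ := hh
  obtain ⟨c, rfl⟩ := (hw.eq_single hd ▸ hcomp).exists_eq_X_sub_C_pow hd
  intro g₁ hg₁ g₂ hg₂
  rw [eq_X_sub_C_pow_of_mem_Hset hhH hg₁ hs hsd, eq_X_sub_C_pow_of_mem_Hset hhH hg₂ hs hsd]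

/-- A nonempty open subset of `ℝᵏ`, `k ≥ 1`, has no isolated points. -/
lemma not_dimGe_of_subsingleton {m k : ℕ} {S : Set (Fin m → ℝ)} (hS : S.Subsingleton)
    (hk : 1 ≤ k) : ¬DimGe S k := by
  rintro ⟨U, ⟨x, hx⟩, hUS, -, V, hV, ⟨e⟩⟩
  have : Subsingleton U := (hS.anti hUS).coe_sort
  have : Subsingleton V := e.symm.injective.subsingleton
  have : Nonempty (Fin k) := ⟨⟨0, hk⟩⟩
  have hVx : V = {(e ⟨x, hx⟩ : Fin k → ℝ)} :=
    Set.eq_singleton_iff_unique_mem.2 ⟨(e _).2, fun y hy => congrArg Subtype.val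
      (Subsingleton.elim (⟨y, hy⟩ : V) (e ⟨x, hx⟩))⟩
  exact not_isOpen_singleton _ (hVx ▸ hV)

theorem stratum_compact_and_single_empty_general (d s : ℕ) (hd : 0 < d) (hsd : s ≤ d)
    (f : ℝ[X]) (hs2 : 2 ≤ s) (u : Composition d)
    (hdim : ∃ n : ℤ, 1 ≤ n ∧ HasDim (strataSet d s f u) n) :
    IsCompact (strataSet d s f u) ∧ HSu d s f (Composition.single d hd) = ∅ := by
  refine ⟨isCompact_strataSet hs2 hsd u, ?_⟩
  obtain ⟨n, hn, ⟨-, rfl⟩ | ⟨-, hdimGe, -⟩⟩ := hdim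
  · omega
  refine Set.eq_empty_of_forall_notMem fun h hh => not_dimGe_of_subsingleton ?_ (by omega) hdimGe
  exact ((Hset_subsingleton_of_mem_HSu_single hd hh hs2 hsd).anti fun _ hp => hp.1).image _

/-- If `s ≥ 2` and the stratum `H_s^u(f)` is at least one dimensional, then `H_s^u(f)` is
compact and, moreover, the stratum `H_s^{(d)}(f)` labelled by the single-part composition
`(d)` is empty (so the lattice of strata of `H_s^u(f)` contains the empty stratum). -/
theorem stratum_compact_and_single_empty (d s : ℕ) (hd : 0 < d) (hsd : s ≤ d)
    (f : ℝ[X]) (hmon : f.Monic) (hdeg : f.natDegree = d) (hhyp : Hyperbolic f)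
    (hs2 : 2 ≤ s) (u : Composition d)
    (hdim : ∃ n : ℤ, 1 ≤ n ∧ HasDim (strataSet d s f u) n) :
    IsCompact (strataSet d s f u) ∧ HSu d s f (Composition.single d hd) = ∅ :=
  stratum_compact_and_single_empty_general d s hd hsd f hs2 u hdim
end
end
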